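/- arXiv:2103.08534 — 10 statements merged into one kernel-verified Lean document; each statement's English description precedes it below -/
import Mathlib

section
/- Let μ be a Borel probability measure on D and λ > 0. Then μ P_t = e^{−λ t} μ holds for all t ≥ 0 if and only if μ G = (1/λ) μ, where μG denotes the measure A ↦ ∫_D G(x,A) μ(dx). -/
open MeasureTheory Filter Set Topology
open scoped ENNReal

noncomputable section

/-- `f` belongs to `C_b(D)`: bounded and continuous on `D`. -/
def MemCb {X : Type*} [TopologicalSpace X] (D : Set X) (f : X → ℝ) : Prop :=
  ContinuousOn f D ∧ ∃ M : ℝ, ∀ x ∈ D, |f x| ≤ M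

/-- `f` belongs to `C_0(D)`: bounded continuous on `D` and `f x → 0` as `x → ∂_K D = Dᶜ`
within `D`. -/
def MemC0 {X : Type*} [TopologicalSpace X] (D : Set X) (f : X → ℝ) : Prop :=
  MemCb D f ∧ Tendsto f ((𝓝ˢ Dᶜ) ⊓ 𝓟 D) (𝓝 (0 : ℝ))

/-- A sub-Markovian semigroup on `D`: a family `(P t)` of sub-Markov kernels concentrated on
`D`, jointly measurable, with `P 0` the identity, satisfying the Chapman–Kolmogorov equations,
and with uniformly exponentially decaying total mass `P t x D ≤ C e^{-Λ t}`. -/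
structure SubMarkovSemigroup {X : Type*} [MeasurableSpace X] (D : Set X) where
  P : ℝ → X → Measure X
  measurable_apply : ∀ A : Set X, MeasurableSet A → Measurable fun p : ℝ × X => P p.1 p.2 A
  subMarkov : ∀ t : ℝ, 0 ≤ t → ∀ x ∈ D, P t x Set.univ ≤ 1
  supported : ∀ t : ℝ, 0 ≤ t → ∀ x ∈ D, P t x Dᶜ = 0
  init : ∀ x ∈ D, P 0 x = Measure.dirac x
  semigroup : ∀ s : ℝ, 0 ≤ s → ∀ t : ℝ, 0 ≤ t → ∀ x ∈ D, ∀ A : Set X, MeasurableSet A →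
      P (s + t) x A = ∫⁻ y, P t y A ∂ (P s x)
  decay : ∃ C : ℝ, 0 < C ∧ ∃ Λ : ℝ, 0 < Λ ∧ ∀ t : ℝ, 0 ≤ t → ∀ x ∈ D,
      P t x D ≤ ENNReal.ofReal (C * Real.exp (-Λ * t))

/-- The Green kernel applied to a function: `G f x = ∫_0^∞ P_t f (x) dt`. -/
def greenFn {X : Type*} [MeasurableSpace X] (P : ℝ → X → Measure X) (f : X → ℝ) (x : X) : ℝ :=
  ∫ t in Set.Ici (0 : ℝ), ∫ y, f y ∂ (P t x)

/-- The Green kernel as a measure: `G(x, A) = ∫_0^∞ P_t(x, A) dt`. -/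
def greenMeas {X : Type*} [MeasurableSpace X] (P : ℝ → X → Measure X) (x : X) (A : Set X) :
    ℝ≥0∞ :=
  ∫⁻ t in Set.Ici (0 : ℝ), P t x A

/-- `μ` is a quasi-stationary distribution for the semigroup `P` on `D`, with absorption rate
`lam`: `μ` is a probability measure on `D` and `μ P_t = e^{-lam t} μ` for all `t ≥ 0`. -/
def IsQSD {X : Type*} [MeasurableSpace X] (P : ℝ → X → Measure X) (D : Set X)
    (lam : ℝ) (μ : Measure X) : Prop :=
  0 < lam ∧ IsProbabilityMeasure μ ∧ μ Dᶜ = 0 ∧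
    ∀ t : ℝ, 0 ≤ t → ∀ A : Set X, MeasurableSet A → A ⊆ D →
      ∫⁻ x, P t x A ∂μ = ENNReal.ofReal (Real.exp (-lam * t)) * μ A

/-!
If `μ P_t = e^{-λt} μ`, integrating over `t ∈ [0, ∞)` gives `μ G = μ / λ` by Tonelli.
Conversely, fix `A ⊆ D` and put `g(s) = (μ P_s)(A)`. Chapman–Kolmogorov and Tonelli give
`∫_u^∞ g(s) ds = (μ G) P_u (A) = g(u) / λ`, so the tail `F(u) = ∫_u^∞ g` solves
`F' = -g = -λ F` on `[0, ∞)`. Hence `F(t) = e^{-λt} F(0)`, i.e.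
`g(t) = e^{-λt} g(0) = e^{-λt} μ(A)`. Finiteness of `g` comes for free from
`g(u) = λ ∫_u^∞ g ≤ λ ∫_0^∞ g = g(0) ≤ 1`.
-/

theorem hasDerivWithinAt_integral_Ioi {E : Type*} [NormedAddCommGroup E] [NormedSpace ℝ E]
    [CompleteSpace E] {f : ℝ → E} {a u : ℝ} (hf : IntegrableOn f (Ioi a)) (hau : a ≤ u)
    (hcont : ContinuousWithinAt f (Ioi u) u) :
    HasDerivWithinAt (fun v => ∫ x in Ioi v, f x) (-f u) (Ici u) u := by
  have hprim : HasDerivWithinAt (fun v => ∫ x in a..v, f x) (f u) (Ici u) u :=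
    intervalIntegral.integral_hasDerivWithinAt_right
      ((intervalIntegrable_iff_integrableOn_Ioc_of_le hau).2 (hf.mono_set Ioc_subset_Ioi_self))
      ⟨Ioi u, self_mem_nhdsWithin, (hf.mono_set (Ioi_subset_Ioi hau)).aestronglyMeasurable⟩
      hcont
  have hsplit : ∀ v, a ≤ v → ∫ x in Ioi v, f x = (∫ x in Ioi a, f x) - ∫ x in a..v, f x :=
    fun v hv => by rw [← intervalIntegral.integral_Ioi_sub_Ioi hf hv, sub_sub_cancel]
  exact ((hasDerivWithinAt_const u _ _).sub hprim).congr (fun v hv => hsplit v (hau.trans hv))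
    (hsplit u hau) |>.congr_deriv (zero_sub _)

theorem eq_exp_mul_of_mul_integral_Ioi_eq {f : ℝ → ℝ} {lam : ℝ} (hf : IntegrableOn f (Ioi 0))
    (h : ∀ u, 0 ≤ u → lam * ∫ x in Ioi u, f x = f u) {t : ℝ} (ht : 0 ≤ t) :
    f t = Real.exp (-lam * t) * f 0 := by
  set F : ℝ → ℝ := fun u => ∫ x in Ioi u, f x
  have hF : ContinuousOn F (Ici 0) := hf.continuousOn_Ici_primitive_Ioi
  have hF' : ∀ u, 0 ≤ u → HasDerivWithinAt F (-(lam * F u)) (Ici u) u := fun u hu => by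
    rw [h u hu]
    refine hasDerivWithinAt_integral_Ioi hf hu ?_
    have hFu := (hF u hu).const_mul lam |>.mono (Ioi_subset_Ici_self.trans (Ici_subset_Ici.2 hu))
    exact hFu.congr (fun v hv => (h v (hu.trans hv.le)).symm) (h u hu).symm
  have hconst : Real.exp (lam * t) * F t = F 0 := by
    have := constant_of_has_deriv_right_zero (f := fun u => Real.exp (lam * u) * F u)
      (((Real.continuous_exp.comp (continuous_const_mul lam)).continuousOn).mul
        (hF.mono Icc_subset_Ici_self)) (fun u hu => ?_) t ⟨ht, le_rfl⟩
    · simpa using this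
    · have hexp : HasDerivWithinAt (fun v => Real.exp (lam * v)) (Real.exp (lam * u) * lam)
          (Ici u) u := by
        simpa using ((hasDerivAt_id u).const_mul lam).exp.hasDerivWithinAt
      exact (hexp.fun_mul (hF' u hu.1)).congr_deriv (by ring)
  have hFt : F t = Real.exp (-lam * t) * F 0 := by
    rw [← hconst, neg_mul, Real.exp_neg, inv_mul_cancel_left₀ (Real.exp_pos _).ne']
  calc f t = lam * F t := (h t ht).symm
    _ = Real.exp (-lam * t) * (lam * F 0) := by rw [hFt]; ring
    _ = Real.exp (-lam * t) * f 0 := by rw [h 0 le_rfl]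

theorem eq_exp_mul_of_setLIntegral_Ici_eq {g : ℝ → ℝ≥0∞} (hg : Measurable g) {lam : ℝ}
    (hlam : 0 < lam) (hg0 : g 0 ≠ ∞)
    (h : ∀ u, 0 ≤ u → ∫⁻ s in Ici u, g s = ENNReal.ofReal (1 / lam) * g u) {t : ℝ} (ht : 0 ≤ t) :
    g t = ENNReal.ofReal (Real.exp (-lam * t)) * g 0 := by
  have hlam' : ENNReal.ofReal (1 / lam) ≠ 0 := by simpa using hlam
  have htail_ne_top : ∫⁻ s in Ioi 0, g s ≠ ∞ := by
    rw [setLIntegral_congr Ioi_ae_eq_Ici, h 0 le_rfl]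
    exact ENNReal.mul_ne_top ENNReal.ofReal_ne_top hg0
  have hg_ne_top : ∀ u, 0 ≤ u → g u ≠ ∞ := fun u hu hgu => htail_ne_top <| by
    rw [setLIntegral_congr Ioi_ae_eq_Ici, eq_top_iff, ← ENNReal.mul_top hlam', ← hgu, ← h u hu]
    exact lintegral_mono_set (Ici_subset_Ici.2 hu)
  have htail : ∀ u, 0 ≤ u → ∫ s in Ioi u, (g s).toReal = (∫⁻ s in Ici u, g s).toReal :=
    fun u hu => by
      rw [integral_toReal hg.aemeasurable, setLIntegral_congr Ioi_ae_eq_Ici]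
      exact (ae_restrict_iff' measurableSet_Ioi).2
        (ae_of_all _ fun s hs => (hg_ne_top s (hu.trans hs.le)).lt_top)
  have hreal := eq_exp_mul_of_mul_integral_Ioi_eq (f := fun s => (g s).toReal) (lam := lam)
    (integrable_toReal_of_lintegral_ne_top hg.aemeasurable htail_ne_top)
    (fun u hu => by
      rw [htail u hu, h u hu, ENNReal.toReal_mul, ENNReal.toReal_ofReal (by positivity)]
      field_simp) ht
  rw [← ENNReal.ofReal_toReal (hg_ne_top t ht), ← ENNReal.ofReal_toReal hg0, hreal,
    ENNReal.ofReal_mul (Real.exp_pos _).le]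

theorem lintegral_exp_neg_mul_Ici {lam : ℝ} (hlam : 0 < lam) :
    ∫⁻ s in Ici 0, ENNReal.ofReal (Real.exp (-lam * s)) = ENNReal.ofReal (1 / lam) := by
  have hneg : -lam < 0 := neg_neg_of_pos hlam
  rw [setLIntegral_congr Ioi_ae_eq_Ici.symm, ← ofReal_integral_eq_lintegral_ofReal
    (integrableOn_exp_mul_Ioi hneg 0) (ae_of_all _ fun _ => (Real.exp_pos _).le),
    integral_exp_mul_Ioi hneg]
  simp

theorem MeasureTheory.Measure.ext_of_forall_subset {X : Type*} [MeasurableSpace X]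
    {μ ν : Measure X} {D : Set X} (hD : MeasurableSet D) (hμ : μ Dᶜ = 0) (hν : ν Dᶜ = 0)
    (h : ∀ A, MeasurableSet A → A ⊆ D → μ A = ν A) : μ = ν := by
  rw [← Measure.restrict_eq_self_of_ae_mem (mem_ae_iff.2 hμ),
    ← Measure.restrict_eq_self_of_ae_mem (mem_ae_iff.2 hν)]
  ext A hA
  rw [Measure.restrict_apply hA, Measure.restrict_apply hA]
  exact h _ (hA.inter hD) inter_subset_right

namespace SubMarkovSemigroup

variable {X : Type*} [MeasurableSpace X] {D : Set X} (S : SubMarkovSemigroup D)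

theorem measurable_P_apply (t : ℝ) {A : Set X} (hA : MeasurableSet A) :
    Measurable fun x => S.P t x A :=
  (S.measurable_apply A hA).comp (measurable_const.prodMk measurable_id)

theorem measurable_P_time (x : X) : Measurable fun t => S.P t x :=
  Measure.measurable_of_measurable_coe _ fun A hA =>
    (S.measurable_apply A hA).comp (measurable_id.prodMk measurable_const)

theorem lintegral_P_zero {μ : Measure X} (hμ : ∀ᵐ x ∂μ, x ∈ D) {A : Set X}
    (hA : MeasurableSet A) : ∫⁻ x, S.P 0 x A ∂μ = μ A := by
  rw [← lintegral_indicator_one hA]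
  refine lintegral_congr_ae (hμ.mono fun x hx => ?_)
  simp [S.init x hx, Measure.dirac_apply' x hA]

def greenMeasure (x : X) : Measure X :=
  (volume.restrict (Ici 0)).bind fun s => S.P s x

theorem greenMeasure_apply (x : X) {B : Set X} (hB : MeasurableSet B) :
    S.greenMeasure x B = greenMeas S.P x B :=
  Measure.bind_apply hB (S.measurable_P_time x).aemeasurable

theorem lintegral_greenMeasure (x : X) {f : X → ℝ≥0∞} (hf : Measurable f) :
    ∫⁻ y, f y ∂S.greenMeasure x = ∫⁻ s in Ici 0, ∫⁻ y, f y ∂S.P s x :=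
  Measure.lintegral_bind (S.measurable_P_time x).aemeasurable hf.aemeasurable

theorem measurable_greenMeasure : Measurable S.greenMeasure :=
  Measure.measurable_of_measurable_coe _ fun B hB => by
    simp_rw [S.greenMeasure_apply _ hB]
    exact (S.measurable_apply B hB).lintegral_prod_left

theorem lintegral_greenMeas (μ : Measure X) [SFinite μ] {A : Set X} (hA : MeasurableSet A) :
    ∫⁻ x, greenMeas S.P x A ∂μ = ∫⁻ s in Ici 0, ∫⁻ x, S.P s x A ∂μ :=
  lintegral_lintegral_swap ((S.measurable_apply A hA).comp measurable_swap).aemeasurable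

theorem bind_greenMeasure_apply (μ : Measure X) {B : Set X} (hB : MeasurableSet B) :
    μ.bind S.greenMeasure B = ∫⁻ x, greenMeas S.P x B ∂μ := by
  rw [Measure.bind_apply hB S.measurable_greenMeasure.aemeasurable]
  exact lintegral_congr fun x => S.greenMeasure_apply x hB

theorem bind_greenMeasure_compl {μ : Measure X} (hμ : ∀ᵐ x ∂μ, x ∈ D) (hD : MeasurableSet D) :
    μ.bind S.greenMeasure Dᶜ = 0 := by
  rw [S.bind_greenMeasure_apply μ hD.compl, lintegral_eq_zero_iff']
  · exact hμ.mono fun x hx => by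
      simp [greenMeas, setLIntegral_congr_fun measurableSet_Ici fun s hs => S.supported s hs x hx]
  · exact ((S.measurable_apply _ hD.compl).lintegral_prod_left).aemeasurable

/-- `μ.bind S.greenMeasure` is the measure `μ G`. -/
theorem setLIntegral_Ici_lintegral_P {μ : Measure X} [SFinite μ] (hμ : ∀ᵐ x ∂μ, x ∈ D)
    {A : Set X} (hA : MeasurableSet A) {u : ℝ} (hu : 0 ≤ u) :
    ∫⁻ s in Ici u, ∫⁻ x, S.P s x A ∂μ = ∫⁻ y, S.P u y A ∂μ.bind S.greenMeasure := by
  have hshift : ∫⁻ s in Ici u, ∫⁻ x, S.P s x A ∂μ = ∫⁻ s in Ici 0, ∫⁻ x, S.P (s + u) x A ∂μ := by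
    rw [← (measurePreserving_add_right volume u).setLIntegral_comp_preimage measurableSet_Ici
      (S.measurable_apply A hA).lintegral_prod_right, preimage_add_const_Ici, sub_self]
  rw [hshift, ← lintegral_lintegral_swap (f := fun x s => S.P (s + u) x A)
      ((S.measurable_apply A hA).comp
        ((measurable_snd.add_const u).prodMk measurable_fst)).aemeasurable,
    Measure.lintegral_bind S.measurable_greenMeasure.aemeasurable
      (S.measurable_P_apply u hA).aemeasurable]
  refine lintegral_congr_ae (hμ.mono fun x hx => ?_)
  dsimp only
  rw [S.lintegral_greenMeasure x (S.measurable_P_apply u hA)]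
  exact setLIntegral_congr_fun measurableSet_Ici fun s hs => S.semigroup s hs u hu x hx A hA

end SubMarkovSemigroup

theorem isQSD_iff_green_eigenmeasure_general
    {X : Type*} [MetricSpace X] [MeasurableSpace X] [BorelSpace X]
    (D : Set X) (hD : IsOpen D)
    (S : SubMarkovSemigroup D)
    (μ : Measure X) (hμ : IsProbabilityMeasure μ) (hμD : μ Dᶜ = 0)
    (lam : ℝ) (hlam : 0 < lam) :
    (∀ t : ℝ, 0 ≤ t → ∀ A : Set X, MeasurableSet A → A ⊆ D →
        ∫⁻ x, S.P t x A ∂μ = ENNReal.ofReal (Real.exp (-lam * t)) * μ A) ↔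
    (∀ A : Set X, MeasurableSet A → A ⊆ D →
        ∫⁻ x, greenMeas S.P x A ∂μ = ENNReal.ofReal (1 / lam) * μ A) := by
  have hμD' : ∀ᵐ x ∂μ, x ∈ D := mem_ae_iff.2 hμD
  constructor
  · intro h A hA hAD
    rw [S.lintegral_greenMeas μ hA,
      setLIntegral_congr_fun measurableSet_Ici fun s hs => h s hs A hA hAD,
      lintegral_mul_const _ (by fun_prop), lintegral_exp_neg_mul_Ici hlam]
  · intro h t ht A hA hAD
    have hμG : μ.bind S.greenMeasure = ENNReal.ofReal (1 / lam) • μ :=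
      Measure.ext_of_forall_subset hD.measurableSet
        (S.bind_greenMeasure_compl hμD' hD.measurableSet) (by simp [hμD]) fun B hB hBD => by
          rw [S.bind_greenMeasure_apply μ hB, h B hB hBD, Measure.smul_apply, smul_eq_mul]
    have htail : ∀ u, 0 ≤ u → ∫⁻ s in Ici u, ∫⁻ x, S.P s x A ∂μ =
        ENNReal.ofReal (1 / lam) * ∫⁻ x, S.P u x A ∂μ := fun u hu => by
      rw [S.setLIntegral_Ici_lintegral_P hμD' hA hu, hμG, lintegral_smul_measure, smul_eq_mul]
    have hfinite : ∫⁻ x, S.P 0 x A ∂μ ≠ ∞ := by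
      rw [S.lintegral_P_zero hμD' hA]
      exact measure_ne_top μ A
    rw [← S.lintegral_P_zero hμD' hA]
    exact eq_exp_mul_of_setLIntegral_Ici_eq (S.measurable_apply A hA).lintegral_prod_right hlam
      hfinite htail ht

/-- a probability measure `μ` on `D` satisfies `μ P_t = e^{-lam t} μ` for all
`t ≥ 0` if and only if `μ G = (1/lam) μ`, where `G` is the Green kernel. -/
theorem isQSD_iff_green_eigenmeasure
    {X : Type*} [MetricSpace X] [CompactSpace X] [MeasurableSpace X] [BorelSpace X]
    (D : Set X) (hD : IsOpen D) (hDne : D.Nonempty)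
    (S : SubMarkovSemigroup D)
    (μ : Measure X) (hμ : IsProbabilityMeasure μ) (hμD : μ Dᶜ = 0)
    (lam : ℝ) (hlam : 0 < lam) :
    (∀ t : ℝ, 0 ≤ t → ∀ A : Set X, MeasurableSet A → A ⊆ D →
        ∫⁻ x, S.P t x A ∂μ = ENNReal.ofReal (Real.exp (-lam * t)) * μ A) ↔
    (∀ A : Set X, MeasurableSet A → A ⊆ D →
        ∫⁻ x, greenMeas S.P x A ∂μ = ENNReal.ofReal (1 / lam) * μ A) :=
  isQSD_iff_green_eigenmeasure_general D hD S μ hμ hμD lam hlam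
end
end

section
/- Let h ∈ C_0(D) with h(x) > 0 for every x ∈ D and suppose G h = (1/λ) h for some λ > 0 (h is a positive right eigenfunction of the Green kernel). Then: (a) P_t h = e^{−λ t} h for all t ≥ 0; (b) if μ is any quasi-stationary distribution with absorption rate λ', then λ' = λ. -/
open MeasureTheory Filter Set Topology
open scoped ENNReal

noncomputable section

/-!
By the Chapman–Kolmogorov equations and Tonelli, `P_s G h = ∫_s^∞ P_t h dt`. Hence for fixed `x`
the function `u s = P_s h x` satisfies `u s = λ ∫_s^∞ u`, so its tail integral `g` solves
`g' = -λ g` and `u s = e^{-λ s} u 0 = e^{-λ s} h x`. Integrating `P_1 h = e^{-λ} h` against a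
quasi-stationary distribution `μ` of rate `λ'` gives `e^{-λ'} μ h = e^{-λ} μ h` with
`0 < μ h < ∞`, so `λ' = λ`.
-/

open Real

theorem eq_mul_exp_of_eq_sub_integral {g : ℝ → ℝ} {lam : ℝ} (hg : Continuous g)
    (heq : ∀ s, 0 ≤ s → g s = g 0 - lam * ∫ t in (0 : ℝ)..s, g t) {b : ℝ} (hb : 0 ≤ b) :
    g b = g 0 * exp (-lam * b) := by
  -- `φ` agrees with `g` on `[0, ∞)` and is differentiable everywhere
  set φ : ℝ → ℝ := fun s => g 0 - lam * ∫ t in (0 : ℝ)..s, g t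
  have hφ : ∀ s, HasDerivAt φ (-(lam * g s)) s := fun s => by
    simpa using ((intervalIntegral.integral_hasDerivAt_right (hg.intervalIntegrable _ _)
      (hg.stronglyMeasurableAtFilter _ _) hg.continuousAt).const_mul lam).const_sub (g 0)
  set Z : ℝ → ℝ := fun s => φ s * exp (lam * s)
  have hZ_cont : Continuous Z :=
    (continuous_iff_continuousAt.2 fun s => (hφ s).continuousAt).mul (by fun_prop)
  have hZ_deriv : ∀ s ∈ Ico 0 b, HasDerivWithinAt Z 0 (Ici s) s := fun s hs => by
    refine (((hφ s).mul ((hasDerivAt_id s).const_mul lam).exp).congr_deriv ?_).hasDerivWithinAt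
    rw [show φ s = g s from (heq s hs.1).symm]
    simp only [id]
    ring
  have hZb : Z b = Z 0 := constant_of_has_deriv_right_zero hZ_cont.continuousOn hZ_deriv b
    ⟨hb, le_rfl⟩
  simp only [Z, φ, ← heq b hb, intervalIntegral.integral_same, mul_zero, sub_zero, exp_zero,
    mul_one] at hZb
  rw [neg_mul, exp_neg, ← hZb]
  field_simp

theorem eq_exp_mul_of_eq_mul_integral_Ici {u : ℝ → ℝ} {lam : ℝ} (hu : IntegrableOn u (Ici 0))
    (heq : ∀ s, 0 ≤ s → u s = lam * ∫ t in Ici s, u t) {s : ℝ} (hs : 0 ≤ s) :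
    u s = exp (-lam * s) * u 0 := by
  set v := (Ici (0 : ℝ)).indicator u
  have hv : Integrable v := (integrable_indicator_iff measurableSet_Ici).2 hu
  set g : ℝ → ℝ := fun s => ∫ t in Ici s, v t
  have hg_primitive : ∀ s, g s = g 0 - ∫ t in (0 : ℝ)..s, v t := fun s => by
    rw [← intervalIntegral.integral_Ici_sub_Ici' hv.integrableOn hv.integrableOn]
    ring
  have hug : ∀ s, 0 ≤ s → u s = lam * g s := fun s hs => by
    simp only [g, v, setIntegral_indicator measurableSet_Ici, Ici_inter_Ici, max_eq_left hs]
    exact heq s hs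
  have hg_cont : Continuous g := by
    rw [funext hg_primitive]
    exact continuous_const.sub
      (intervalIntegral.continuous_primitive (fun _ _ => hv.intervalIntegrable) 0)
  have hg_ode : ∀ s, 0 ≤ s → g s = g 0 - lam * ∫ t in (0 : ℝ)..s, g t := fun s hs => by
    rw [hg_primitive s, ← intervalIntegral.integral_const_mul]
    congr 1
    refine intervalIntegral.integral_congr fun t ht => ?_
    rw [uIcc_of_le hs] at ht
    simp only [v, indicator_of_mem (show t ∈ Ici 0 from ht.1), hug t ht.1]
  rw [hug s hs, hug 0 le_rfl, eq_mul_exp_of_eq_sub_integral hg_cont hg_ode hs]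
  ring

theorem eq_of_bind_eq_smul {α : Type*} [MeasurableSpace α] {μ : Measure α} {κ : α → Measure α}
    (hκ : Measurable κ) {a b : ℝ≥0∞} (hμ : μ.bind κ = a • μ) {F : α → ℝ≥0∞} (hF : Measurable F)
    (hκF : ∀ᵐ x ∂μ, ∫⁻ y, F y ∂κ x = b * F x) (h0 : ∫⁻ x, F x ∂μ ≠ 0)
    (htop : ∫⁻ x, F x ∂μ ≠ ∞) : a = b := by
  refine (ENNReal.mul_left_inj h0 htop).1 ?_
  calc a * ∫⁻ x, F x ∂μ = ∫⁻ x, F x ∂μ.bind κ := by rw [hμ, lintegral_smul_measure, smul_eq_mul]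
    _ = ∫⁻ x, b * F x ∂μ := by
      rw [Measure.lintegral_bind hκ.aemeasurable hF.aemeasurable]
      exact lintegral_congr_ae hκF
    _ = b * ∫⁻ x, F x ∂μ := lintegral_const_mul b hF

namespace SubMarkovSemigroup

variable {X : Type*} [MeasurableSpace X] {D : Set X} (S : SubMarkovSemigroup D)

theorem measurable_uncurry : Measurable fun p : ℝ × X => S.P p.1 p.2 :=
  Measure.measurable_of_measurable_coe _ S.measurable_apply

theorem measurable_P (t : ℝ) : Measurable (S.P t) :=
  S.measurable_uncurry.comp (measurable_const.prodMk measurable_id)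

theorem ae_mem {t : ℝ} (ht : 0 ≤ t) {x : X} (hx : x ∈ D) : ∀ᵐ z ∂S.P t x, z ∈ D :=
  ae_iff.2 (S.supported t ht x hx)

theorem isFiniteMeasure {t : ℝ} (ht : 0 ≤ t) {x : X} (hx : x ∈ D) : IsFiniteMeasure (S.P t x) :=
  ⟨(S.subMarkov t ht x hx).trans_lt ENNReal.one_lt_top⟩

theorem bind_P {s t : ℝ} (hs : 0 ≤ s) (ht : 0 ≤ t) {x : X} (hx : x ∈ D) :
    (S.P s x).bind (S.P t) = S.P (s + t) x :=
  Measure.ext fun A hA => by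
    rw [Measure.bind_apply hA (S.measurable_P t).aemeasurable, S.semigroup s hs t ht x hx A hA]

theorem lintegral_lintegral_Ici {F : X → ℝ≥0∞} (hF : Measurable F) {s : ℝ} (hs : 0 ≤ s) {x : X}
    (hx : x ∈ D) :
    ∫⁻ y, (∫⁻ t in Ici 0, ∫⁻ z, F z ∂S.P t y) ∂S.P s x = ∫⁻ t in Ici s, ∫⁻ z, F z ∂S.P t x := by
  have := S.isFiniteMeasure hs hx
  have hw : Measurable fun p : ℝ × X => ∫⁻ z, F z ∂S.P p.1 p.2 :=
    (Measure.measurable_lintegral hF).comp S.measurable_uncurry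
  -- Tonelli, the substitution `t ↦ s + t`, and Chapman–Kolmogorov
  rw [lintegral_lintegral_swap (f := fun y t => ∫⁻ z, F z ∂S.P t y)
      (hw.comp measurable_swap).aemeasurable,
    ← (measurePreserving_add_left volume s).setLIntegral_comp_preimage measurableSet_Ici
      (f := fun t => ∫⁻ z, F z ∂S.P t x) (hw.comp (measurable_id.prodMk measurable_const)),
    preimage_const_add_Ici, sub_self]
  refine setLIntegral_congr_fun measurableSet_Ici fun t ht => ?_
  rw [← S.bind_P hs ht hx, Measure.lintegral_bind (S.measurable_P t).aemeasurable hF.aemeasurable]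

theorem P_univ {t : ℝ} (ht : 0 ≤ t) {x : X} (hx : x ∈ D) : S.P t x univ = S.P t x D := by
  rw [← Measure.restrict_apply_univ D, Measure.restrict_eq_self_of_ae_mem (S.ae_mem ht hx)]

theorem integrable {f : X → ℝ} (hf : Measurable f) (hf0 : 0 ≤ f) {M : ℝ}
    (hfM : ∀ z ∈ D, f z ≤ M) {t : ℝ} (ht : 0 ≤ t) {x : X} (hx : x ∈ D) :
    Integrable f (S.P t x) :=
  have := S.isFiniteMeasure ht hx
  Integrable.of_bound hf.aestronglyMeasurable M <| (S.ae_mem ht hx).mono fun z hz => by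
    rw [Real.norm_of_nonneg (hf0 z)]
    exact hfM z hz

theorem ofReal_integral {f : X → ℝ} (hf : Measurable f) (hf0 : 0 ≤ f) {M : ℝ}
    (hfM : ∀ z ∈ D, f z ≤ M) {t : ℝ} (ht : 0 ≤ t) {x : X} (hx : x ∈ D) :
    ENNReal.ofReal (∫ z, f z ∂S.P t x) = ∫⁻ z, ENNReal.ofReal (f z) ∂S.P t x :=
  ofReal_integral_eq_lintegral_ofReal (S.integrable hf hf0 hfM ht hx) (ae_of_all _ hf0)

theorem measurable_integral {f : X → ℝ} (hf : Measurable f) (hf0 : 0 ≤ f) (x : X) :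
    Measurable fun t => ∫ z, f z ∂S.P t x := by
  simp_rw [integral_eq_lintegral_of_nonneg_ae (ae_of_all _ hf0) hf.aestronglyMeasurable]
  exact ((Measure.measurable_lintegral hf.ennreal_ofReal).comp
    (S.measurable_uncurry.comp (measurable_id.prodMk measurable_const))).ennreal_toReal

theorem integrableOn_integral {f : X → ℝ} (hf : Measurable f) (hf0 : 0 ≤ f) {M : ℝ}
    (hfM : ∀ z ∈ D, f z ≤ M) {x : X} (hx : x ∈ D) :
    IntegrableOn (fun t => ∫ z, f z ∂S.P t x) (Ici 0) := by
  obtain ⟨C, hC, Λ, hΛ, hdecay⟩ := S.decay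
  have hM : 0 ≤ M := (hf0 x).trans (hfM x hx)
  have hbound : ∀ t, 0 ≤ t → ∫ z, f z ∂S.P t x ≤ M * (C * exp (-Λ * t)) := fun t ht => by
    have := S.isFiniteMeasure ht hx
    calc ∫ z, f z ∂S.P t x ≤ ∫ _, M ∂S.P t x :=
          integral_mono_ae (S.integrable hf hf0 hfM ht hx) (integrable_const M)
            ((S.ae_mem ht hx).mono hfM)
      _ = M * (S.P t x).real D := by
          rw [integral_const, smul_eq_mul, mul_comm, measureReal_def, measureReal_def,
            S.P_univ ht hx]
      _ ≤ M * (C * exp (-Λ * t)) := mul_le_mul_of_nonneg_left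
          (ENNReal.toReal_le_of_le_ofReal (by positivity) (hdecay t ht x hx)) hM
  have hexp : IntegrableOn (fun t => M * (C * exp (-Λ * t))) (Ici 0) := by
    rw [integrableOn_Ici_iff_integrableOn_Ioi]
    simpa only [mul_assoc, IntegrableOn] using (exp_neg_integrableOn_Ioi 0 hΛ).const_mul (M * C)
  refine hexp.mono' (S.measurable_integral hf hf0 x).aestronglyMeasurable
    ((ae_restrict_mem measurableSet_Ici).mono fun t ht => ?_)
  rw [Real.norm_of_nonneg (integral_nonneg hf0)]
  exact hbound t ht

theorem ofReal_greenFn {f : X → ℝ} (hf : Measurable f) (hf0 : 0 ≤ f) {M : ℝ}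
    (hfM : ∀ z ∈ D, f z ≤ M) {x : X} (hx : x ∈ D) :
    ENNReal.ofReal (greenFn S.P f x) = ∫⁻ t in Ici 0, ∫⁻ z, ENNReal.ofReal (f z) ∂S.P t x := by
  rw [greenFn, ofReal_integral_eq_lintegral_ofReal (S.integrableOn_integral hf hf0 hfM hx)
    (ae_of_all _ fun t => integral_nonneg hf0)]
  exact setLIntegral_congr_fun measurableSet_Ici fun t ht => S.ofReal_integral hf hf0 hfM ht hx

theorem lintegral_ofReal_greenFn {f : X → ℝ} (hf : Measurable f) (hf0 : 0 ≤ f) {M : ℝ}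
    (hfM : ∀ z ∈ D, f z ≤ M) {s : ℝ} (hs : 0 ≤ s) {x : X} (hx : x ∈ D) :
    ∫⁻ y, ENNReal.ofReal (greenFn S.P f y) ∂S.P s x =
      ENNReal.ofReal (∫ t in Ici s, ∫ z, f z ∂S.P t x) := by
  have hIci : Ici s ⊆ Ici 0 := Ici_subset_Ici.2 hs
  calc ∫⁻ y, ENNReal.ofReal (greenFn S.P f y) ∂S.P s x
      = ∫⁻ y, (∫⁻ t in Ici 0, ∫⁻ z, ENNReal.ofReal (f z) ∂S.P t y) ∂S.P s x :=
        lintegral_congr_ae ((S.ae_mem hs hx).mono fun y hy => S.ofReal_greenFn hf hf0 hfM hy)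
    _ = ∫⁻ t in Ici s, ∫⁻ z, ENNReal.ofReal (f z) ∂S.P t x :=
        S.lintegral_lintegral_Ici hf.ennreal_ofReal hs hx
    _ = ∫⁻ t in Ici s, ENNReal.ofReal (∫ z, f z ∂S.P t x) :=
        setLIntegral_congr_fun measurableSet_Ici fun t ht =>
          (S.ofReal_integral hf hf0 hfM (hs.trans ht) hx).symm
    _ = ENNReal.ofReal (∫ t in Ici s, ∫ z, f z ∂S.P t x) :=
        (ofReal_integral_eq_lintegral_ofReal ((S.integrableOn_integral hf hf0 hfM hx).mono_set hIci)
          (ae_of_all _ fun t => integral_nonneg hf0)).symm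

theorem integral_eq_mul_integral_Ici {f : X → ℝ} (hf : Measurable f) (hf0 : 0 ≤ f) {M : ℝ}
    (hfM : ∀ z ∈ D, f z ≤ M) {lam : ℝ} (hlam : 0 < lam)
    (heig : ∀ x ∈ D, greenFn S.P f x = 1 / lam * f x) {s : ℝ} (hs : 0 ≤ s) {x : X}
    (hx : x ∈ D) : ∫ z, f z ∂S.P s x = lam * ∫ t in Ici s, ∫ z, f z ∂S.P t x := by
  have hc : 0 ≤ 1 / lam := by positivity
  have h : ENNReal.ofReal (1 / lam * ∫ z, f z ∂S.P s x) =
      ENNReal.ofReal (∫ t in Ici s, ∫ z, f z ∂S.P t x) := by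
    rw [← S.lintegral_ofReal_greenFn hf hf0 hfM hs hx, ENNReal.ofReal_mul hc,
      S.ofReal_integral hf hf0 hfM hs hx, ← lintegral_const_mul _ hf.ennreal_ofReal]
    refine lintegral_congr_ae ((S.ae_mem hs hx).mono fun y hy => ?_)
    dsimp only
    rw [heig y hy, ENNReal.ofReal_mul hc]
  rw [ENNReal.ofReal_eq_ofReal_iff (mul_nonneg hc (integral_nonneg hf0))
    (setIntegral_nonneg measurableSet_Ici fun t _ => integral_nonneg hf0)] at h
  rw [← h]
  field_simp

theorem integral_eq_exp_mul {f : X → ℝ} (hf : Measurable f) (hf0 : 0 ≤ f) {M : ℝ}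
    (hfM : ∀ z ∈ D, f z ≤ M) {lam : ℝ} (hlam : 0 < lam)
    (heig : ∀ x ∈ D, greenFn S.P f x = 1 / lam * f x) {t : ℝ} (ht : 0 ≤ t) {x : X}
    (hx : x ∈ D) : ∫ z, f z ∂S.P t x = exp (-lam * t) * f x := by
  have hP : ∀ s, 0 ≤ s → ∫ z, f z ∂S.P s x = lam * ∫ r in Ici s, ∫ z, f z ∂S.P r x :=
    fun s hs => S.integral_eq_mul_integral_Ici hf hf0 hfM hlam heig hs hx
  have hP0 : ∫ z, f z ∂S.P 0 x = f x := by
    rw [hP 0 le_rfl, ← greenFn, heig x hx]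
    field_simp
  rw [eq_exp_mul_of_eq_mul_integral_Ici (S.integrableOn_integral hf hf0 hfM hx) hP ht, hP0]

theorem bind_P_eq_of_isQSD (hD : MeasurableSet D) {lam : ℝ} {μ : Measure X}
    (hμ : IsQSD S.P D lam μ) {t : ℝ} (ht : 0 ≤ t) :
    μ.bind (S.P t) = ENNReal.ofReal (exp (-lam * t)) • μ := by
  obtain ⟨-, -, hμD, hμP⟩ := hμ
  refine Measure.ext fun A hA => ?_
  rw [Measure.bind_apply hA (S.measurable_P t).aemeasurable, Measure.smul_apply, smul_eq_mul,
    ← measure_inter_conull hμD, ← hμP t ht _ (hA.inter hD) inter_subset_right]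
  exact lintegral_congr_ae
    ((ae_iff.2 hμD).mono fun x hx => (measure_inter_conull (S.supported t ht x hx)).symm)

theorem rate_eq_of_isQSD (hD : MeasurableSet D) {f : X → ℝ} (hf : Measurable f) (hf0 : 0 ≤ f)
    {M : ℝ} (hfM : ∀ z ∈ D, f z ≤ M) (hpos : ∀ x ∈ D, 0 < f x) {lam t : ℝ} (ht : 0 < t)
    (hPf : ∀ x ∈ D, ∫ z, f z ∂S.P t x = exp (-lam * t) * f x) {lam' : ℝ} {μ : Measure X}
    (hμ : IsQSD S.P D lam' μ) : lam' = lam := by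
  have := hμ.2.1
  have hμD : ∀ᵐ x ∂μ, x ∈ D := ae_iff.2 hμ.2.2.1
  have hF : ∀ᵐ x ∂μ, ∫⁻ z, ENNReal.ofReal (f z) ∂S.P t x =
      ENNReal.ofReal (exp (-lam * t)) * ENNReal.ofReal (f x) := hμD.mono fun x hx => by
    rw [← S.ofReal_integral hf hf0 hfM ht.le hx, hPf x hx, ENNReal.ofReal_mul (exp_nonneg _)]
  have h0 : ∫⁻ x, ENNReal.ofReal (f x) ∂μ ≠ 0 := by
    rw [Ne, lintegral_eq_zero_iff hf.ennreal_ofReal]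
    intro hzero
    have : ∀ᵐ _ ∂μ, False := (hzero.and hμD).mono fun x ⟨hx0, hxD⟩ =>
      (ENNReal.ofReal_pos.2 (hpos x hxD)).ne' hx0
    exact IsProbabilityMeasure.ne_zero μ (ae_eq_bot.1 (eventually_false_iff_eq_bot.1 this))
  have htop : ∫⁻ x, ENNReal.ofReal (f x) ∂μ ≠ ∞ := by
    refine ((lintegral_mono_ae (hμD.mono fun x hx => ENNReal.ofReal_le_ofReal (hfM x hx))).trans_lt
      ?_).ne
    simp [lintegral_const]
  have hrate := eq_of_bind_eq_smul (S.measurable_P t) (S.bind_P_eq_of_isQSD hD hμ ht.le)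
    hf.ennreal_ofReal hF h0 htop
  rw [ENNReal.ofReal_eq_ofReal_iff (exp_nonneg _) (exp_nonneg _), exp_eq_exp] at hrate
  linarith [mul_right_cancel₀ ht.ne' hrate]

theorem integral_indicator {h : X → ℝ} {t : ℝ} (ht : 0 ≤ t) {x : X} (hx : x ∈ D) :
    ∫ z, D.indicator h z ∂S.P t x = ∫ z, h z ∂S.P t x :=
  integral_congr_ae ((S.ae_mem ht hx).mono fun _ hz => indicator_of_mem hz h)

theorem greenFn_indicator {h : X → ℝ} {x : X} (hx : x ∈ D) :
    greenFn S.P (D.indicator h) x = greenFn S.P h x :=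
  setIntegral_congr_fun measurableSet_Ici fun _ ht => S.integral_indicator ht hx

end SubMarkovSemigroup

theorem right_eigenfunction_semigroup_and_rate_general
    {X : Type*} [MetricSpace X] [MeasurableSpace X] [BorelSpace X]
    (D : Set X) (hD : IsOpen D)
    (S : SubMarkovSemigroup D)
    (lam : ℝ) (hlam : 0 < lam) (h : X → ℝ) (hC0 : MemC0 D h) (hpos : ∀ x ∈ D, 0 < h x)
    (heig : ∀ x ∈ D, greenFn S.P h x = (1 / lam) * h x) :
    (∀ t : ℝ, 0 ≤ t → ∀ x ∈ D, ∫ y, h y ∂ (S.P t x) = Real.exp (-lam * t) * h x) ∧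
    (∀ lam' : ℝ, ∀ μ : Measure X, IsQSD S.P D lam' μ → lam' = lam) := by
  classical
  obtain ⟨⟨hcont, M, hM⟩, -⟩ := hC0
  -- `h` is arbitrary off `D`, so work with `D.indicator h`, which is measurable and bounded
  have hf : Measurable (D.indicator h) := by
    rw [← piecewise_eq_indicator]
    exact hcont.measurable_piecewise (g := 0) continuousOn_const hD.measurableSet
  have hf0 : 0 ≤ D.indicator h := indicator_nonneg fun x hx => (hpos x hx).le
  have hfD : ∀ x ∈ D, D.indicator h x = h x := fun x hx => indicator_of_mem hx h
  have hfM : ∀ x ∈ D, D.indicator h x ≤ M := fun x hx =>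
    (hfD x hx).trans_le ((le_abs_self _).trans (hM x hx))
  have hfeig : ∀ x ∈ D, greenFn S.P (D.indicator h) x = 1 / lam * D.indicator h x :=
    fun x hx => by rw [S.greenFn_indicator hx, hfD x hx, heig x hx]
  have hPf : ∀ t, 0 ≤ t → ∀ x ∈ D,
      ∫ y, D.indicator h y ∂S.P t x = exp (-lam * t) * D.indicator h x :=
    fun t ht x hx => S.integral_eq_exp_mul hf hf0 hfM hlam hfeig ht hx
  refine ⟨fun t ht x hx => ?_, fun lam' μ hμ => ?_⟩
  · rw [← S.integral_indicator ht hx, hPf t ht x hx, hfD x hx]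
  · exact S.rate_eq_of_isQSD hD.measurableSet hf hf0 hfM (fun x hx => (hfD x hx).symm ▸ hpos x hx)
      one_pos (hPf 1 zero_le_one) hμ

/-- if `h ∈ C_0(D)` is a positive right eigenfunction of the Green kernel,
`G h = (1/lam) h`, then (a) `P_t h = e^{-lam t} h` on `D` for all `t ≥ 0`, and (b) the
absorption rate of any quasi-stationary distribution equals `lam`. -/
theorem right_eigenfunction_semigroup_and_rate
    {X : Type*} [MetricSpace X] [CompactSpace X] [MeasurableSpace X] [BorelSpace X]
    (D : Set X) (hD : IsOpen D) (hDne : D.Nonempty)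
    (S : SubMarkovSemigroup D)
    (lam : ℝ) (hlam : 0 < lam) (h : X → ℝ) (hC0 : MemC0 D h) (hpos : ∀ x ∈ D, 0 < h x)
    (heig : ∀ x ∈ D, greenFn S.P h x = (1 / lam) * h x) :
    (∀ t : ℝ, 0 ≤ t → ∀ x ∈ D, ∫ y, h y ∂ (S.P t x) = Real.exp (-lam * t) * h x) ∧
    (∀ lam' : ℝ, ∀ μ : Measure X, IsQSD S.P D lam' μ → lam' = lam) :=
  right_eigenfunction_semigroup_and_rate_general D hD S lam hlam h hC0 hpos heig
end
end

section
/- Let M be a metric space and let (P_t)_{t≥0} be a family of sub-Markov kernels on M such that for every t ≥ 0 and every bounded continuous f : M → ℝ the map x ↦ ∫_M f(y) P_t(x,dy) is continuous. Let K ⊆ M be compact and U ⊆ M open, and suppose that for every x ∈ K there exists t ≥ 0 with P_t(x,U) > 0. Then there exist finitely many times t_1, …, t_n ≥ 0 and a constant δ > 0 such that for every x ∈ K, max_{1≤i≤n} P_{t_i}(x,U) ≥ δ. -/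
open MeasureTheory Filter Set Topology
open scoped ENNReal

/-!
For each `t ≥ 0` the map `x ↦ P t x U` is lower semicontinuous: by inner regularity `P t x U` is
approximated from below by `∫ f d(P t x)` for Urysohn functions `1_F ≤ f ≤ 1_U`, and these
integrals depend continuously on `x` by the Feller property. Hence every `x ∈ K` has a
neighbourhood on which one fixed `P t (·, U)` stays above a fixed positive level, and compactness
of `K` leaves finitely many times and levels.
-/

lemma measure_le_ofReal_integral_le_measure {M : Type*} [TopologicalSpace M]
    [MeasurableSpace M] [OpensMeasurableSpace M] (ν : Measure M) [IsFiniteMeasure ν]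
    {F U : Set M} (hF : MeasurableSet F) (hU : MeasurableSet U) {f : M → ℝ} (hf : Continuous f)
    (hf_nonneg : ∀ y, 0 ≤ f y) (hfF : ∀ y ∈ F, 1 ≤ f y) (hfU : ∀ y, y ∉ U → f y = 0)
    (hf_le_one : ∀ y, f y ≤ 1) :
    ν F ≤ ENNReal.ofReal (∫ y, f y ∂ν) ∧ ENNReal.ofReal (∫ y, f y ∂ν) ≤ ν U := by
  have hint : Integrable f ν := Integrable.of_bound hf.aestronglyMeasurable 1
    (ae_of_all _ fun y => by rw [Real.norm_of_nonneg (hf_nonneg y)]; exact hf_le_one y)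
  rw [ofReal_integral_eq_lintegral_ofReal hint (ae_of_all _ hf_nonneg),
    ← lintegral_indicator_one hF, ← lintegral_indicator_one hU]
  constructor <;> refine lintegral_mono fun y => ?_
  · by_cases hy : y ∈ F
    · simpa [hy] using hfF y hy
    · simp [hy]
  · by_cases hy : y ∈ U
    · simpa [hy] using hf_le_one y
    · simp [hy, hfU y hy]

lemma lowerSemicontinuous_measure_of_continuous_integral {X M : Type*} [TopologicalSpace X]
    [TopologicalSpace M] [NormalSpace M] [MeasurableSpace M] [OpensMeasurableSpace M]
    (μ : X → Measure M) [∀ x, IsFiniteMeasure (μ x)] [∀ x, (μ x).WeaklyRegular]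
    (hμ : ∀ f : M → ℝ, Continuous f → (∃ C : ℝ, ∀ y, |f y| ≤ C) →
      Continuous fun x => ∫ y, f y ∂(μ x))
    {U : Set M} (hU : IsOpen U) :
    LowerSemicontinuous fun x => μ x U := by
  intro x c hc
  obtain ⟨F, hFU, hF, hcF⟩ := hU.exists_lt_isClosed hc
  obtain ⟨f, hf0, hf1, hf01⟩ := exists_continuous_zero_one_of_isClosed hU.isClosed_compl hF
    (disjoint_compl_left.mono_right hFU)
  have hbounds := fun x => measure_le_ofReal_integral_le_measure (μ x) hF.measurableSet
    hU.measurableSet f.continuous (fun y => (hf01 y).1) (fun y hy => (hf1 hy).ge)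
    (fun y hy => hf0 hy) (fun y => (hf01 y).2)
  have hcont : Continuous fun x => ENNReal.ofReal (∫ y, f y ∂(μ x)) :=
    ENNReal.continuous_ofReal.comp <| hμ f f.continuous
      ⟨1, fun y => by rw [abs_of_nonneg (hf01 y).1]; exact (hf01 y).2⟩
  filter_upwards [hcont.continuousAt.eventually_const_lt (hcF.trans_le (hbounds x).1)]
    with y hy using hy.trans_le (hbounds y).2

lemma IsCompact.exists_finset_forall_ofReal_le {X ι : Type*} [TopologicalSpace X] {K : Set X}
    (hK : IsCompact K) {g : ι → X → ℝ≥0∞} (hg : ∀ i, LowerSemicontinuous (g i))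
    (hpos : ∀ x ∈ K, ∃ i, 0 < g i x) :
    ∃ T : Finset ι, ∃ δ : ℝ, 0 < δ ∧ ∀ x ∈ K, ∃ i ∈ T, ENNReal.ofReal δ ≤ g i x := by
  classical
  refine hK.induction_on ⟨∅, 1, one_pos, by simp⟩ ?_ ?_ ?_
  · rintro s t hst ⟨T, δ, hδ, hT⟩
    exact ⟨T, δ, hδ, fun x hx => hT x (hst hx)⟩
  · rintro s t ⟨S, δ, hδ, hS⟩ ⟨T, ε, hε, hT⟩
    refine ⟨S ∪ T, min δ ε, lt_min hδ hε, ?_⟩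
    rintro x (hx | hx)
    · obtain ⟨i, hi, hle⟩ := hS x hx
      exact ⟨i, Finset.mem_union_left _ hi,
        (ENNReal.ofReal_le_ofReal (min_le_left _ _)).trans hle⟩
    · obtain ⟨i, hi, hle⟩ := hT x hx
      exact ⟨i, Finset.mem_union_right _ hi,
        (ENNReal.ofReal_le_ofReal (min_le_right _ _)).trans hle⟩
  · intro x hx
    obtain ⟨i, hi⟩ := hpos x hx
    obtain ⟨r, -, hr0, hr⟩ := ENNReal.lt_iff_exists_real_btwn.1 hi
    exact ⟨{y | ENNReal.ofReal r < g i y}, mem_nhdsWithin_of_mem_nhds (hg i x _ hr),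
      {i}, r, ENNReal.ofReal_pos.1 hr0, fun y hy => ⟨i, Finset.mem_singleton_self i, hy.le⟩⟩

/-- for a family `(P t)` of Feller sub-Markov kernels on a metric space `M`, if
`K` is compact, `U` is open, and from every `x ∈ K` some `P t (x, U) > 0` with `t ≥ 0`, then
there are finitely many times `t₁, …, tₙ ≥ 0` and `δ > 0` such that every `x ∈ K` satisfies
`P tᵢ (x, U) ≥ δ` for some `i`. -/
theorem uniform_accessibility_of_compact
    {M : Type*} [MetricSpace M] [MeasurableSpace M] [BorelSpace M]
    (P : ℝ → M → Measure M)
    (hsub : ∀ t : ℝ, 0 ≤ t → ∀ x, P t x Set.univ ≤ 1)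
    (hFeller : ∀ t : ℝ, 0 ≤ t → ∀ f : M → ℝ, Continuous f → (∃ Mb : ℝ, ∀ x, |f x| ≤ Mb) →
      Continuous fun x => ∫ y, f y ∂ (P t x))
    (K U : Set M) (hK : IsCompact K) (hU : IsOpen U)
    (hacc : ∀ x ∈ K, ∃ t : ℝ, 0 ≤ t ∧ 0 < P t x U) :
    ∃ n : ℕ, ∃ ts : Fin n → ℝ, (∀ i, 0 ≤ ts i) ∧ ∃ δ : ℝ, 0 < δ ∧
      ∀ x ∈ K, ∃ i : Fin n, ENNReal.ofReal δ ≤ P (ts i) x U := by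
  have hlsc : ∀ t : Ici (0 : ℝ), LowerSemicontinuous fun x => P t x U := by
    rintro ⟨t, ht⟩
    have : ∀ x, IsFiniteMeasure (P t x) := fun x => ⟨(hsub t ht x).trans_lt ENNReal.one_lt_top⟩
    exact lowerSemicontinuous_measure_of_continuous_integral (P t) (hFeller t ht) hU
  obtain ⟨T, δ, hδ, hT⟩ := hK.exists_finset_forall_ofReal_le hlsc fun x hx =>
    let ⟨t, ht, hpos⟩ := hacc x hx; ⟨⟨t, ht⟩, hpos⟩
  refine ⟨T.card, fun j => T.equivFin.symm j, fun j => (T.equivFin.symm j : Ici (0 : ℝ)).2,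
    δ, hδ, fun x hx => ?_⟩
  obtain ⟨t, htT, hle⟩ := hT x hx
  exact ⟨T.equivFin ⟨t, htT⟩, by simpa using hle⟩
end

section
/- Let D ⊆ ℝⁿ be a bounded open set with closure K, and let S⁰, S¹, …, Sᵐ : ℝⁿ → ℝⁿ be locally Lipschitz vector fields. Suppose there exist a point x̃ ∈ ℝⁿ∖K and δ > 0 such that Σ_{j=1}^m ⟨Sʲ(x), x − x̃⟩² ≥ δ‖x − x̃‖² for all x ∈ D. Then for every x ∈ K there exist T ≥ 0, a continuous control u : [0,T] → ℝᵐ, and a C¹ path y : [0,T] → ℝⁿ with y(0) = x, y'(t) = S⁰(y(t)) + Σ_{j=1}^m uʲ(t) Sʲ(y(t)) for all t ∈ [0,T], and y(T) ∉ K. -/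
/-!
With the feedback `uʲ = λ ⟪Sʲ(y), y - x̃⟫` the closed-loop field `G` satisfies
`⟪G z, z - x̃⟫ = ⟪S⁰ z, z - x̃⟫ + λ ∑ⱼ ⟪Sʲ z, z - x̃⟫²`, and the Pinsky condition makes the sum
positive on the compact set `K`, so a large `λ` gives `⟪G z, z - x̃⟫ ≥ 1` on `K`. Along a
trajectory staying in `K` the quantity `‖y - x̃‖²` then grows at rate at least `2`, which is
impossible for longer than `sup_K ‖z - x̃‖² / 2`. To have a trajectory at all, `G` is multiplied
by a Lipschitz cutoff equal to `1` near `K`, and the trajectory is stopped at the first time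
its distance to `K` reaches a small positive value.
-/

open Set Metric
open scoped NNReal

section LocallyLipschitz

variable {X F : Type*} [PseudoEMetricSpace X] [NormedAddCommGroup F]

theorem LocallyLipschitz.smul [NormedSpace ℝ F] {f : X → ℝ} {g : X → F}
    (hf : LocallyLipschitz f) (hg : LocallyLipschitz g) :
    LocallyLipschitz fun x => f x • g x :=
  (contDiff_smul (𝕜 := ℝ)).locallyLipschitz.comp (hf.prodMk hg)

theorem LocallyLipschitz.inner [InnerProductSpace ℝ F] {f g : X → F}
    (hf : LocallyLipschitz f) (hg : LocallyLipschitz g) :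
    LocallyLipschitz fun x => (inner ℝ (f x) (g x) : ℝ) :=
  (contDiff_inner (𝕜 := ℝ)).locallyLipschitz.comp (hf.prodMk hg)

theorem LocallyLipschitz.finset_sum {ι : Type*} (s : Finset ι) {f : ι → X → F}
    (hf : ∀ i ∈ s, LocallyLipschitz (f i)) : LocallyLipschitz fun x => ∑ i ∈ s, f i x := by
  classical
  induction s using Finset.induction_on with
  | empty => simpa using LocallyLipschitz.const (0 : F)
  | insert i s hi ih =>
    simp only [Finset.sum_insert hi]
    exact (hf i (s.mem_insert_self i)).add (ih fun j hj => hf j (Finset.mem_insert_of_mem hj))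

end LocallyLipschitz

theorem exists_locallyLipschitz_cutoff {X : Type*} [PseudoMetricSpace X] [ProperSpace X]
    {K : Set X} (hK : IsCompact K) (hKne : K.Nonempty) :
    ∃ χ : X → ℝ, LocallyLipschitz χ ∧ HasCompactSupport χ ∧
      ∀ z, infDist z K ≤ 1 → χ z = 1 := by
  refine ⟨fun z => min 1 (max 0 (2 - infDist z K)), ?_, ?_, fun z hz => ?_⟩
  · exact (((LocallyLipschitz.const 2).sub
      (lipschitz_infDist_pt K).locallyLipschitz).const_max 0).const_min 1
  · refine HasCompactSupport.intro (hK.cthickening (r := 2)) fun z hz => ?_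
    have h2 : 2 ≤ infDist z K := not_lt.mp fun h =>
      hz (thickening_subset_cthickening _ _ ((mem_thickening_iff_infDist_lt hKne).mpr h))
    simp [max_eq_left (by linarith : 2 - infDist z K ≤ 0)]
  · exact min_eq_left (le_max_of_le_right (by linarith))

theorem exists_forall_mem_Icc_hasDerivAt_of_hasCompactSupport {E : Type*}
    [NormedAddCommGroup E] [NormedSpace ℝ E] [ProperSpace E] {V : E → E}
    (hV : LocallyLipschitz V) (hVc : HasCompactSupport V) (x : E) {T : ℝ} (hT : 0 ≤ T) :
    ∃ y : ℝ → E, y 0 = x ∧ ∀ t ∈ Icc 0 T, HasDerivAt y (V (y t)) t := by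
  obtain ⟨C, hC⟩ := hV.continuous.bounded_above_of_compact_support hVc
  set a : ℝ≥0 := C.toNNReal * (T + 1).toNNReal
  obtain ⟨L, hL⟩ := hV.locallyLipschitzOn.exists_lipschitzOnWith_of_compact
    (isCompact_closedBall x a)
  have hPL : IsPicardLindelof (fun _ => V) (tmin := -1) (tmax := T + 1)
      ⟨0, by constructor <;> linarith⟩ x a 0 C.toNNReal L :=
    .of_time_independent (fun z _ => (hC z).trans (Real.le_coe_toNNReal C)) hL <| by
      simp [a, Real.coe_toNNReal _ (by linarith : 0 ≤ T + 1),
        max_eq_left (by linarith : 1 ≤ T + 1)]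
  obtain ⟨y, hy0, hy⟩ := hPL.exists_eq_forall_mem_Icc_hasDerivWithinAt₀
  exact ⟨y, hy0, fun t ht => (hy t ⟨by linarith [ht.1], by linarith [ht.2]⟩).hasDerivAt
    (Icc_mem_nhds (by linarith [ht.1]) (by linarith [ht.2]))⟩

theorem exists_mem_Icc_eq_and_forall_le {f : ℝ → ℝ} {a b c : ℝ} (hab : a ≤ b)
    (hf : ContinuousOn f (Icc a b)) (ha : f a ≤ c) (hb : c ≤ f b) :
    ∃ T ∈ Icc a b, f T = c ∧ ∀ s ∈ Icc a T, f s ≤ c := by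
  set A := Icc a b ∩ f ⁻¹' {c}
  have hA : A.Nonempty := intermediate_value_Icc hab hf ⟨ha, hb⟩
  have hAmem : sInf A ∈ A :=
    (hf.preimage_isClosed_of_isClosed isClosed_Icc isClosed_singleton).csInf_mem hA
      ⟨a, fun t ht => ht.1.1⟩
  refine ⟨sInf A, hAmem.1, hAmem.2, fun s hs => not_lt.mp fun hlt => ?_⟩
  have hsb : s ≤ b := hs.2.trans hAmem.1.2
  obtain ⟨s', hs', hs'c⟩ := intermediate_value_Icc hs.1 (hf.mono (Icc_subset_Icc_right hsb))
    ⟨ha, hlt.le⟩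
  have hAs' : sInf A ≤ s' := csInf_le ⟨a, fun t ht => ht.1.1⟩ ⟨⟨hs'.1, hs'.2.trans hsb⟩, hs'c⟩
  have hs's : s' = s := le_antisymm hs'.2 (hs.2.trans hAs')
  exact hlt.ne' (hs's ▸ hs'c)

theorem IsCompact.exists_forall_le_add_mul {X : Type*} [TopologicalSpace X] {K : Set X}
    (hK : IsCompact K) {a q : X → ℝ} (ha : ContinuousOn a K) (hq : ContinuousOn q K)
    (hq0 : ∀ z ∈ K, 0 < q z) (c : ℝ) : ∃ lam : ℝ, ∀ z ∈ K, c ≤ a z + lam * q z := by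
  obtain ⟨lam, hlam⟩ := hK.bddAbove_image (f := fun z => (c - a z) / q z) <|
    (continuousOn_const.sub ha).div hq fun z hz => (hq0 z hz).ne'
  refine ⟨lam, fun z hz => ?_⟩
  have := hlam (mem_image_of_mem _ hz)
  rw [div_le_iff₀ (hq0 z hz)] at this
  linarith

section InnerProductSpace

variable {E : Type*} [NormedAddCommGroup E] [InnerProductSpace ℝ E]

theorem norm_sub_sq_add_two_mul_le {y y' : ℝ → E} {p : E} {T : ℝ} (hT : 0 ≤ T)
    (hy : ∀ t ∈ Icc 0 T, HasDerivAt y (y' t) t)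
    (hout : ∀ t ∈ Icc 0 T, 1 ≤ (inner ℝ (y' t) (y t - p) : ℝ)) :
    ‖y 0 - p‖ ^ 2 + 2 * T ≤ ‖y T - p‖ ^ 2 := by
  have hg : ∀ t ∈ Icc 0 T, HasDerivAt (fun s => ‖y s - p‖ ^ 2 - 2 * s)
      (2 * inner ℝ (y t - p) (y' t) - 2) t := fun t ht => by
    have h2 : HasDerivAt (fun s : ℝ => 2 * s) 2 t := by
      simpa using (hasDerivAt_id t).const_mul (2 : ℝ)
    exact ((hy t ht).sub_const p).norm_sq.sub h2
  have hmono : MonotoneOn (fun s => ‖y s - p‖ ^ 2 - 2 * s) (Icc 0 T) := by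
    refine monotoneOn_of_hasDerivWithinAt_nonneg (convex_Icc 0 T)
      (fun t ht => (hg t ht).continuousAt.continuousWithinAt)
      (fun t ht => (hg t (interior_subset ht)).hasDerivWithinAt) fun t ht => ?_
    have := hout t (interior_subset ht)
    rw [real_inner_comm] at this
    linarith
  have := hmono (left_mem_Icc.mpr hT) (right_mem_Icc.mpr hT) hT
  simp only at this
  linarith

theorem exists_hasDerivAt_notMem_of_one_le_inner [ProperSpace E] {K : Set E}
    (hK : IsCompact K) {G : E → E} (hG : LocallyLipschitz G) {p : E}
    (hGK : ∀ z ∈ K, 1 ≤ (inner ℝ (G z) (z - p) : ℝ)) {x : E} (hx : x ∈ K) :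
    ∃ T, 0 ≤ T ∧ ∃ y : ℝ → E, y 0 = x ∧ (∀ t ∈ Icc 0 T, HasDerivAt y (G (y t)) t) ∧
      y T ∉ K := by
  obtain ⟨χ, hχ, hχc, hχ1⟩ := exists_locallyLipschitz_cutoff hK ⟨x, hx⟩
  obtain ⟨R, hR⟩ := hK.bddAbove_image (f := fun z => ‖z - p‖ ^ 2) (by fun_prop)
  have hR0 : 0 ≤ R := (sq_nonneg _).trans (hR (mem_image_of_mem _ hx))
  obtain ⟨y, hy0, hy⟩ := exists_forall_mem_Icc_hasDerivAt_of_hasCompactSupport (hχ.smul hG)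
    hχc.smul_right x (by linarith : 0 ≤ R + 1)
  have hyG : ∀ t ∈ Icc 0 (R + 1), infDist (y t) K ≤ 1 → HasDerivAt y (G (y t)) t :=
    fun t ht h => by simpa [hχ1 _ h] using hy t ht
  obtain ⟨t₁, ht₁, hyt₁⟩ : ∃ t ∈ Icc 0 (R + 1), y t ∉ K := by
    by_contra! hin
    have := norm_sub_sq_add_two_mul_le (by linarith)
      (fun t ht => hyG t ht ((infDist_zero_of_mem (hin t ht)).trans_le zero_le_one))
      fun t ht => hGK _ (hin t ht)
    linarith [hR (mem_image_of_mem _ (hin _ (right_mem_Icc.mpr (by linarith)))),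
      sq_nonneg ‖y 0 - p‖]
  have hd : 0 < infDist (y t₁) K := (hK.isClosed.notMem_iff_infDist_pos ⟨x, hx⟩).mp hyt₁
  have hcont : ContinuousOn (fun t => infDist (y t) K) (Icc 0 t₁) := fun t ht =>
    ((continuous_infDist_pt K).continuousAt.comp
      (hy t ⟨ht.1, ht.2.trans ht₁.2⟩).continuousAt).continuousWithinAt
  obtain ⟨T, hT, hTd, hTle⟩ := exists_mem_Icc_eq_and_forall_le ht₁.1 hcont
    (c := min 1 (infDist (y t₁) K)) (by simp [hy0, infDist_zero_of_mem hx, hd.le])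
    (min_le_right _ _)
  refine ⟨T, hT.1, y, hy0, fun t ht => hyG t ⟨ht.1, ht.2.trans (hT.2.trans ht₁.2)⟩
    ((hTle t ht).trans (min_le_left _ _)), fun hyT => ?_⟩
  rw [infDist_zero_of_mem hyT] at hTd
  exact (lt_min one_pos hd).ne hTd

variable {ι : Type*} [Fintype ι]

def feedbackField (S0 : E → E) (S : ι → E → E) (p : E) (lam : ℝ) (z : E) : E :=
  S0 z + ∑ j, (lam * inner ℝ (S j z) (z - p)) • S j z

theorem LocallyLipschitz.feedbackField {S0 : E → E} {S : ι → E → E}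
    (hS0 : LocallyLipschitz S0) (hS : ∀ j, LocallyLipschitz (S j)) (p : E) (lam : ℝ) :
    LocallyLipschitz (feedbackField S0 S p lam) :=
  hS0.add <| LocallyLipschitz.finset_sum _ fun j _ =>
    ((LocallyLipschitz.const lam).smul ((hS j).inner (LocallyLipschitz.id.sub
      (LocallyLipschitz.const p)))).smul (hS j)

theorem inner_feedbackField_sub (S0 : E → E) (S : ι → E → E) (p : E) (lam : ℝ) (z : E) :
    (inner ℝ (feedbackField S0 S p lam z) (z - p) : ℝ) =
      inner ℝ (S0 z) (z - p) + lam * ∑ j, (inner ℝ (S j z) (z - p) : ℝ) ^ 2 := by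
  simp [feedbackField, inner_add_left, sum_inner, real_inner_smul_left, Finset.mul_sum, sq,
    mul_assoc]

end InnerProductSpace

theorem control_exits_closure_of_pinsky_condition_general
    {n m : ℕ}
    (D : Set (EuclideanSpace ℝ (Fin n))) (hDb : Bornology.IsBounded D)
    (S0 : EuclideanSpace ℝ (Fin n) → EuclideanSpace ℝ (Fin n))
    (S : Fin m → EuclideanSpace ℝ (Fin n) → EuclideanSpace ℝ (Fin n))
    (hS0 : LocallyLipschitz S0) (hS : ∀ j, LocallyLipschitz (S j))
    (xt : EuclideanSpace ℝ (Fin n)) (hxt : xt ∉ closure D)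
    (δ : ℝ) (hδ : 0 < δ)
    (hpinsky : ∀ x ∈ D, δ * ‖x - xt‖ ^ 2 ≤ ∑ j : Fin m, (inner ℝ (S j x) (x - xt) : ℝ) ^ 2) :
    ∀ x ∈ closure D, ∃ T : ℝ, 0 ≤ T ∧
      ∃ u : ℝ → Fin m → ℝ, ContinuousOn u (Set.Icc 0 T) ∧
      ∃ y : ℝ → EuclideanSpace ℝ (Fin n), y 0 = x ∧
        (∀ t ∈ Set.Icc (0 : ℝ) T,
          HasDerivAt y (S0 (y t) + ∑ j : Fin m, u t j • S j (y t)) t) ∧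
        y T ∉ closure D := by
  intro x hx
  have hK : IsCompact (closure D) := hDb.isCompact_closure
  have hS0c := hS0.continuous
  have hSc : ∀ j, Continuous (S j) := fun j => (hS j).continuous
  have hpinskyK : ∀ z ∈ closure D,
      δ * ‖z - xt‖ ^ 2 ≤ ∑ j : Fin m, (inner ℝ (S j z) (z - xt) : ℝ) ^ 2 :=
    fun z hz => closure_minimal (t := {z | δ * ‖z - xt‖ ^ 2 ≤
      ∑ j : Fin m, (inner ℝ (S j z) (z - xt) : ℝ) ^ 2}) hpinsky
        (isClosed_le (by fun_prop) (by fun_prop)) hz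
  obtain ⟨lam, hlam⟩ := hK.exists_forall_le_add_mul (a := fun z => inner ℝ (S0 z) (z - xt))
    (q := fun z => ∑ j : Fin m, (inner ℝ (S j z) (z - xt) : ℝ) ^ 2) (by fun_prop) (by fun_prop)
    (fun z hz => (mul_pos hδ (pow_pos (norm_pos_iff.mpr (sub_ne_zero.mpr
      (ne_of_mem_of_not_mem hz hxt))) 2)).trans_le (hpinskyK z hz)) 1
  obtain ⟨T, hT, y, hy0, hy, hyT⟩ := exists_hasDerivAt_notMem_of_one_le_inner hK
    (hS0.feedbackField hS xt lam) (fun z hz => by rw [inner_feedbackField_sub]; exact hlam z hz) hx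
  have hyc : ContinuousOn y (Icc 0 T) := fun t ht => (hy t ht).continuousAt.continuousWithinAt
  exact ⟨T, hT, fun t j => lam * inner ℝ (S j (y t)) (y t - xt),
    continuousOn_pi.mpr fun j => by fun_prop, y, hy0, hy, hyT⟩

/-- Pinsky-type criterion: if the bounded open set `D ⊆ ℝⁿ` with closure `K`
admits a point `x̃ ∉ K` and `δ > 0` with `∑_j ⟪Sʲ(x), x − x̃⟫² ≥ δ‖x − x̃‖²` on `D`, then from
every `x ∈ K` the control system `y' = S⁰(y) + ∑_j uʲ Sʲ(y)` admits a trajectory leaving `K`. -/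
theorem control_exits_closure_of_pinsky_condition
    {n m : ℕ}
    (D : Set (EuclideanSpace ℝ (Fin n))) (hD : IsOpen D) (hDb : Bornology.IsBounded D)
    (S0 : EuclideanSpace ℝ (Fin n) → EuclideanSpace ℝ (Fin n))
    (S : Fin m → EuclideanSpace ℝ (Fin n) → EuclideanSpace ℝ (Fin n))
    (hS0 : LocallyLipschitz S0) (hS : ∀ j, LocallyLipschitz (S j))
    (xt : EuclideanSpace ℝ (Fin n)) (hxt : xt ∉ closure D)
    (δ : ℝ) (hδ : 0 < δ)
    (hpinsky : ∀ x ∈ D, δ * ‖x - xt‖ ^ 2 ≤ ∑ j : Fin m, (inner ℝ (S j x) (x - xt) : ℝ) ^ 2) :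
    ∀ x ∈ closure D, ∃ T : ℝ, 0 ≤ T ∧
      ∃ u : ℝ → Fin m → ℝ, ContinuousOn u (Set.Icc 0 T) ∧
      ∃ y : ℝ → EuclideanSpace ℝ (Fin n), y 0 = x ∧
        (∀ t ∈ Set.Icc (0 : ℝ) T,
          HasDerivAt y (S0 (y t) + ∑ j : Fin m, u t j • S j (y t)) t) ∧
        y T ∉ closure D :=
  control_exits_closure_of_pinsky_condition_general D hDb S0 S hS0 hS xt hxt δ hδ hpinsky
end

section
/- Let D ⊆ ℝⁿ be a bounded open set with closure K satisfying the exterior sphere condition, let F : ℝⁿ → ℝⁿ be a Lipschitz vector field pointing inward D, and let Φ : ℝ × ℝⁿ → ℝⁿ be the flow of F (so Φ_0(x) = x and (d/dt)Φ_t(x) = F(Φ_t(x)) for all t, x). Then: (i) Φ_t(K) ⊆ D for every t > 0; (ii) the set A := ⋂_{t≥0} Φ_t(K) is a compact subset of D satisfying Φ_t(A) = A for every t ∈ ℝ, and for every x ∈ K the ω-limit set of x under Φ (points y such that Φ_{t_k}(x) → y for some t_k → ∞) is contained in A. -/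
/-!
Let `f(t)` be the distance from `Φ_t(x)` to `K`. While `Φ_t(x) ∉ K`, the direction `v` from a
nearest point `p ∈ ∂D` to `Φ_t(x)` is an outward normal at `p`, so the right derivative of `f` is
at most `⟪F(Φ_t x), v⟫ ≤ ⟪F p, v⟫ + L f ≤ L f`; Grönwall from the last zero of `f` gives `f = 0`,
so `K` is forward invariant. If `Φ_t(x) ∈ ∂D` for some `t > 0`, the earlier orbit stays in `K`,
hence outside the exterior ball touching `∂D` at `Φ_t(x)` along a normal `v` with `⟪F, v⟫ < 0`;
but a velocity with `⟪F, v⟫ < 0` means the orbit came from inside that ball. The claims about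
`A = ⋂_{t ≥ 0} Φ_t(K)` then follow from the group law of the flow, continuity of `Φ_t` for
`t ≥ 0` and compactness of `K`.
-/

open Set Metric Filter Topology

/-- The set `N_p` of unit outward normal vectors to `K` at `p`: unit vectors `v` such that
`dist(p + r v, K) = r` for some `r > 0` (exterior sphere condition at `p` in direction `v`). -/
def outwardNormals {n : ℕ} (K : Set (EuclideanSpace ℝ (Fin n)))
    (p : EuclideanSpace ℝ (Fin n)) : Set (EuclideanSpace ℝ (Fin n)) :=
  {v | ‖v‖ = 1 ∧ ∃ r : ℝ, 0 < r ∧ Metric.infDist (p + r • v) K = r}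

open scoped RealInnerProductSpace

section RealFunctions

variable {f g : ℝ → ℝ}

theorem nonpos_of_liminf_right_slope_le_mul {C a b : ℝ} (hab : a ≤ b)
    (hf : ContinuousOn f (Icc a b)) (ha : f a ≤ 0)
    (hslope : ∀ u ∈ Ico a b, 0 < f u → ∀ r, C * f u < r →
      ∃ᶠ z in 𝓝[>] u, (z - u)⁻¹ * (f z - f u) < r) :
    f b ≤ 0 := by
  by_contra! hb
  set S := Icc a b ∩ f ⁻¹' Iic 0
  have hS : IsCompact S :=
    isCompact_Icc.of_isClosed_subset (hf.preimage_isClosed_of_isClosed isClosed_Icc isClosed_Iic)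
      inter_subset_left
  set t₁ := sSup S
  have ht₁ : t₁ ∈ S := hS.sSup_mem ⟨a, left_mem_Icc.2 hab, ha⟩
  have hpos : ∀ u ∈ Ioc t₁ b, 0 < f u := fun u hu => by
    by_contra! hu0
    exact hu.1.not_ge (le_csSup hS.bddAbove ⟨⟨ht₁.1.1.trans hu.1.le, hu.2⟩, hu0⟩)
  have ht₁b : t₁ < b := ht₁.1.2.lt_of_ne fun h => (h ▸ hb).not_ge ht₁.2
  have hgronwall : ∀ u ∈ Ioc t₁ b, f b ≤ f u * Real.exp (C * (b - u)) := by
    intro u hu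
    have hau : a ≤ u := ht₁.1.1.trans hu.1.le
    have := le_gronwallBound_of_liminf_deriv_right_le (f' := fun z => C * f z) (K := C) (ε := 0)
      (hf.mono (Icc_subset_Icc hau le_rfl))
      (fun z hz => hslope z ⟨hau.trans hz.1, hz.2⟩ (hpos z ⟨hu.1.trans_le hz.1, hz.2.le⟩))
      le_rfl (fun z _ => by simp) b ⟨hu.2, le_rfl⟩
    rwa [gronwallBound_ε0] at this
  have hlim : ContinuousWithinAt (fun u => f u * Real.exp (C * (b - u))) (Ioc t₁ b) t₁ :=
    ((hf t₁ ht₁.1).mono (Ioc_subset_Icc_self.trans (Icc_subset_Icc ht₁.1.1 le_rfl))).mul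
      (by fun_prop)
  have ht₁_mem : t₁ ∈ closure (Ioc t₁ b) := by
    rw [closure_Ioc ht₁b.ne]
    exact left_mem_Icc.2 ht₁b.le
  have hb_le := continuousWithinAt_const.closure_le ht₁_mem hlim hgronwall
  exact hb.not_ge (hb_le.trans (mul_nonpos_of_nonpos_of_nonneg ht₁.2 (Real.exp_pos _).le))

theorem eventually_slope_lt_of_le_of_hasDerivAt {g' u r : ℝ} (hg : HasDerivAt g g' u)
    (hfg : ∀ z, f z ≤ g z) (hu : f u = g u) (hr : g' < r) :
    ∀ᶠ z in 𝓝[>] u, (z - u)⁻¹ * (f z - f u) < r := by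
  filter_upwards [hg.hasDerivWithinAt.limsup_slope_le' (lt_irrefl u) hr, self_mem_nhdsWithin]
    with z hz (hzu : u < z)
  rw [slope_def_field] at hz
  calc (z - u)⁻¹ * (f z - f u) ≤ (z - u)⁻¹ * (g z - g u) := by
        refine mul_le_mul_of_nonneg_left ?_ (inv_nonneg.2 (sub_nonneg.2 hzu.le))
        linarith [hfg z]
    _ = (g z - g u) / (z - u) := by ring
    _ < r := hz

theorem HasDerivAt.nonpos_of_eventually_left_ge {f' t : ℝ} (hf : HasDerivAt f f' t)
    (hle : ∀ᶠ s in 𝓝[<] t, f t ≤ f s) : f' ≤ 0 := by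
  refine le_of_tendsto ((hasDerivWithinAt_iff_tendsto_slope' (s := Iio t) (lt_irrefl t)).1
    hf.hasDerivWithinAt) ?_
  filter_upwards [hle, self_mem_nhdsWithin] with s hs (hst : s < t)
  rw [slope_def_field]
  exact div_nonpos_of_nonneg_of_nonpos (sub_nonneg.2 hs) (sub_nonpos.2 hst.le)

end RealFunctions

section InnerProductSpace

variable {E : Type*} [NormedAddCommGroup E] [InnerProductSpace ℝ E] {γ : ℝ → E} {γ' : E}

theorem HasDerivAt.norm {t : ℝ} (hγ : HasDerivAt γ γ' t) (h0 : γ t ≠ 0) :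
    HasDerivAt (fun s => ‖γ s‖) (⟪γ t, γ'⟫ / ‖γ t‖) t := by
  have hsq := hγ.norm_sq.sqrt (pow_ne_zero 2 (norm_ne_zero_iff.2 h0))
  simp only [Real.sqrt_sq (norm_nonneg _)] at hsq
  convert hsq using 1
  field_simp

theorem inner_nonneg_of_hasDerivAt_of_eventually_mem_left {K : Set E} {v : E} {r t : ℝ}
    (hγ : HasDerivAt γ γ' t) (hv : ‖v‖ = 1) (hr : 0 < r) (hsphere : infDist (γ t + r • v) K = r)
    (hK : ∀ᶠ s in 𝓝[<] t, γ s ∈ K) : 0 ≤ ⟪v, γ'⟫ := by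
  set c := γ t + r • v
  have hct : γ t - c = -(r • v) := by simp [c]
  have hderiv := (hγ.sub_const c).norm_sq.nonpos_of_eventually_left_ge ?_
  · rw [hct, inner_neg_left, real_inner_smul_left] at hderiv
    nlinarith
  filter_upwards [hK] with s hs
  have hrs : r ≤ ‖γ s - c‖ := by
    rw [← dist_eq_norm, dist_comm, ← hsphere]
    exact infDist_le_dist_of_mem hs
  rw [hct, norm_neg, norm_smul, hv, mul_one, Real.norm_of_nonneg hr.le]
  gcongr

end InnerProductSpace

theorem exists_mem_frontier_outwardNormals {n : ℕ} {D : Set (EuclideanSpace ℝ (Fin n))}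
    {x : EuclideanSpace ℝ (Fin n)} (hne : (closure D).Nonempty) (hx : x ∉ closure D) :
    ∃ p ∈ frontier D, ∃ v ∈ outwardNormals (closure D) p, x = p + infDist x (closure D) • v := by
  obtain ⟨p, hp, hpx⟩ := exists_mem_frontier_infDist_compl_eq_dist (s := (closure D)ᶜ) hx
    (compl_ne_univ.2 hne)
  rw [compl_compl] at hpx
  rw [frontier_compl] at hp
  set d := infDist x (closure D)
  have hd : 0 < d := (isClosed_closure.notMem_iff_infDist_pos hne).1 hx
  have hxp : x = p + d • (d⁻¹ • (x - p)) := by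
    rw [smul_smul, mul_inv_cancel₀ hd.ne', one_smul, add_sub_cancel]
  refine ⟨p, frontier_closure_subset hp, d⁻¹ • (x - p), ⟨?_, d, hd, by rw [← hxp]⟩, hxp⟩
  rw [norm_smul, ← dist_eq_norm, ← hpx, norm_inv, Real.norm_of_nonneg hd.le, inv_mul_cancel₀ hd.ne']

structure IsFlowOf {E : Type*} [NormedAddCommGroup E] [NormedSpace ℝ E] (F : E → E)
    (Φ : ℝ → E → E) : Prop where
  zero_apply : ∀ x, Φ 0 x = x
  hasDerivAt : ∀ x t, HasDerivAt (fun s => Φ s x) (F (Φ t x)) t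

namespace IsFlowOf

variable {E : Type*} [NormedAddCommGroup E] [NormedSpace ℝ E] {F : E → E} {Φ : ℝ → E → E}
  {LF : NNReal}

theorem continuous_orbit (hΦ : IsFlowOf F Φ) (x : E) : Continuous fun t => Φ t x :=
  continuous_iff_continuousAt.2 fun t => (hΦ.hasDerivAt x t).continuousAt

theorem dist_le (hΦ : IsFlowOf F Φ) (hF : LipschitzWith LF F) {t : ℝ} (ht : 0 ≤ t) (x y : E) :
    dist (Φ t x) (Φ t y) ≤ dist x y * Real.exp (LF * t) := by
  simpa using dist_le_of_trajectories_ODE (v := fun _ => F) (fun _ => hF)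
    (hΦ.continuous_orbit x).continuousOn (fun s _ => (hΦ.hasDerivAt x s).hasDerivWithinAt)
    (hΦ.continuous_orbit y).continuousOn (fun s _ => (hΦ.hasDerivAt y s).hasDerivWithinAt)
    (by simp [hΦ.zero_apply]) t ⟨ht, le_rfl⟩

theorem continuous (hΦ : IsFlowOf F Φ) (hF : LipschitzWith LF F) {t : ℝ} (ht : 0 ≤ t) :
    Continuous (Φ t) :=
  (LipschitzWith.of_dist_le_mul (K := ⟨Real.exp (LF * t), (Real.exp_pos _).le⟩) fun x y => by
    rw [mul_comm]; exact hΦ.dist_le hF ht x y).continuous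

theorem map_add (hΦ : IsFlowOf F Φ) (hF : LipschitzWith LF F) (s t : ℝ) (x : E) :
    Φ (s + t) x = Φ s (Φ t x) := by
  have := ODE_solution_unique_univ (v := fun _ => F) (s := fun _ => univ) (t₀ := 0)
    (fun _ => hF.lipschitzOnWith) (f := fun u => Φ (u + t) x) (g := fun u => Φ u (Φ t x))
    (fun u => ⟨(hΦ.hasDerivAt x (u + t)).comp_add_const u t, mem_univ _⟩)
    (fun u => ⟨hΦ.hasDerivAt _ u, mem_univ _⟩) (by simp [hΦ.zero_apply])
  exact congrFun this s

end IsFlowOf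

section InwardField

variable {n : ℕ} {D : Set (EuclideanSpace ℝ (Fin n))}
  {F : EuclideanSpace ℝ (Fin n) → EuclideanSpace ℝ (Fin n)} {LF : NNReal}

theorem eventually_slope_infDist_closure_lt (hF : LipschitzWith LF F)
    (hinward : ∀ p ∈ frontier D, ∀ v ∈ outwardNormals (closure D) p, ⟪F p, v⟫ ≤ 0)
    {γ : ℝ → EuclideanSpace ℝ (Fin n)} {u r : ℝ} (hγ : HasDerivAt γ (F (γ u)) u)
    (hne : (closure D).Nonempty) (hu : γ u ∉ closure D)
    (hr : LF * infDist (γ u) (closure D) < r) :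
    ∀ᶠ z in 𝓝[>] u, (z - u)⁻¹ * (infDist (γ z) (closure D) - infDist (γ u) (closure D)) < r := by
  obtain ⟨p, hp, v, hv, hup⟩ := exists_mem_frontier_outwardNormals hne hu
  set d := infDist (γ u) (closure D)
  have hd : 0 < d := (isClosed_closure.notMem_iff_infDist_pos hne).1 hu
  replace hup : γ u - p = d • v := by rw [hup, add_sub_cancel_left]
  have hnorm : ‖γ u - p‖ = d := by rw [hup, norm_smul, hv.1, mul_one, Real.norm_of_nonneg hd.le]
  have hderiv := (hγ.sub_const p).norm (by rw [← norm_ne_zero_iff, hnorm]; exact hd.ne')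
  have hbound : ⟪γ u - p, F (γ u)⟫ / ‖γ u - p‖ ≤ LF * d := by
    rw [hup, real_inner_smul_left, ← hup, hnorm, mul_div_cancel_left₀ _ hd.ne']
    calc ⟪v, F (γ u)⟫ = ⟪F p, v⟫ + ⟪v, F (γ u) - F p⟫ := by
          rw [inner_sub_right, real_inner_comm v (F p)]; ring
      _ ≤ 0 + ‖F (γ u) - F p‖ := by
          gcongr
          · exact hinward p hp v hv
          · simpa [hv.1] using real_inner_le_norm v (F (γ u) - F p)
      _ ≤ LF * d := by
          rw [zero_add, ← dist_eq_norm, ← hnorm, ← dist_eq_norm]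
          exact hF.dist_le_mul _ _
  refine eventually_slope_lt_of_le_of_hasDerivAt hderiv (fun z => ?_) hnorm.symm
    (hbound.trans_lt hr)
  rw [← dist_eq_norm]
  exact infDist_le_dist_of_mem (frontier_subset_closure hp)

variable {Φ : ℝ → EuclideanSpace ℝ (Fin n) → EuclideanSpace ℝ (Fin n)}

theorem IsFlowOf.isForwardInvariant_closure (hΦ : IsFlowOf F Φ) (hF : LipschitzWith LF F)
    (hinward : ∀ p ∈ frontier D, ∀ v ∈ outwardNormals (closure D) p, ⟪F p, v⟫ ≤ 0) :
    IsForwardInvariant Φ (closure D) := by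
  intro T hT x hx
  have hne : (closure D).Nonempty := ⟨x, hx⟩
  have hcont : Continuous fun t => infDist (Φ t x) (closure D) :=
    (continuous_infDist_pt _).comp (hΦ.continuous_orbit x)
  have hT0 : infDist (Φ T x) (closure D) ≤ 0 :=
    nonpos_of_liminf_right_slope_le_mul hT hcont.continuousOn
      (by simp [hΦ.zero_apply, infDist_zero_of_mem hx]) fun u _ hu _ hr =>
      (eventually_slope_infDist_closure_lt hF hinward (hΦ.hasDerivAt x u) hne
        ((isClosed_closure.notMem_iff_infDist_pos hne).2 hu) hr).frequently
  exact (isClosed_closure.mem_iff_infDist_zero hne).2 (le_antisymm hT0 infDist_nonneg)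

theorem IsFlowOf.mapsTo_closure_of_pos (hΦ : IsFlowOf F Φ)
    (hK : IsForwardInvariant Φ (closure D))
    (hinward : ∀ p ∈ frontier D, ∃ v ∈ outwardNormals (closure D) p, ⟪F p, v⟫ < 0)
    {t : ℝ} (ht : 0 < t) : MapsTo (Φ t) (closure D) D := by
  intro x hx
  by_contra hxD
  have hp : Φ t x ∈ frontier D := ⟨hK ht.le hx, fun h => hxD (interior_subset h)⟩
  obtain ⟨v, ⟨hv, r, hr, hsphere⟩, hlt⟩ := hinward _ hp
  have hge := inner_nonneg_of_hasDerivAt_of_eventually_mem_left (hΦ.hasDerivAt x t) hv hr hsphere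
    (by filter_upwards [Ioo_mem_nhdsLT ht] with s hs using hK hs.1.le hx)
  rw [real_inner_comm] at hge
  exact hlt.not_ge hge

end InwardField

section ForwardAttractor

variable {α : Type*} {Φ : ℝ → α → α} {K : Set α}

def forwardAttractor (Φ : ℝ → α → α) (K : Set α) : Set α :=
  ⋂ t ∈ Ici (0 : ℝ), Φ t '' K

theorem forwardAttractor_subset_image {t : ℝ} (ht : 0 ≤ t) :
    forwardAttractor Φ K ⊆ Φ t '' K :=
  biInter_subset_of_mem (mem_Ici.2 ht)

theorem forwardAttractor_subset (h0 : ∀ x, Φ 0 x = x) : forwardAttractor Φ K ⊆ K := by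
  have hid : Φ 0 = id := funext h0
  simpa [hid] using forwardAttractor_subset_image (Φ := Φ) (K := K) le_rfl

theorem apply_mem_of_mem_forwardAttractor (h0 : ∀ x, Φ 0 x = x)
    (hadd : ∀ s t x, Φ (s + t) x = Φ s (Φ t x)) (hK : IsForwardInvariant Φ K) {x : α}
    (hx : x ∈ forwardAttractor Φ K) (t : ℝ) : Φ t x ∈ K := by
  rcases le_or_gt 0 t with ht | ht
  · exact hK ht (forwardAttractor_subset h0 hx)
  · obtain ⟨y, hy, rfl⟩ := forwardAttractor_subset_image (neg_nonneg.2 ht.le) hx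
    rwa [← hadd, add_neg_cancel, h0]

theorem image_forwardAttractor (h0 : ∀ x, Φ 0 x = x)
    (hadd : ∀ s t x, Φ (s + t) x = Φ s (Φ t x)) (hK : IsForwardInvariant Φ K) (t : ℝ) :
    Φ t '' forwardAttractor Φ K = forwardAttractor Φ K := by
  have hmaps : ∀ t, MapsTo (Φ t) (forwardAttractor Φ K) (forwardAttractor Φ K) :=
    fun t x hx => mem_iInter₂.2 fun s _ =>
      ⟨Φ (t - s) x, apply_mem_of_mem_forwardAttractor h0 hadd hK hx _, by
        rw [← hadd, add_sub_cancel]⟩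
  refine (hmaps t).image_subset.antisymm fun x hx => ⟨Φ (-t) x, hmaps _ hx, ?_⟩
  rw [← hadd, add_neg_cancel, h0]

variable [TopologicalSpace α] [T2Space α]

theorem isCompact_forwardAttractor (h0 : ∀ x, Φ 0 x = x) (hK : IsCompact K)
    (hc : ∀ t, 0 ≤ t → Continuous (Φ t)) : IsCompact (forwardAttractor Φ K) :=
  hK.of_isClosed_subset (isClosed_biInter fun t ht => (hK.image (hc t ht)).isClosed)
    (forwardAttractor_subset h0)

theorem mem_forwardAttractor_of_tendsto {ι : Type*} {l : Filter ι} [l.NeBot]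
    (hadd : ∀ s t x, Φ (s + t) x = Φ s (Φ t x)) (hK : IsForwardInvariant Φ K)
    (hKc : IsCompact K) (hc : ∀ t, 0 ≤ t → Continuous (Φ t)) {x y : α} {τ : ι → ℝ}
    (hx : x ∈ K) (hτ : Tendsto τ l atTop) (hy : Tendsto (fun i => Φ (τ i) x) l (𝓝 y)) :
    y ∈ forwardAttractor Φ K := by
  refine mem_iInter₂.2 fun s hs => (hKc.image (hc s hs)).isClosed.mem_of_tendsto hy ?_
  filter_upwards [hτ.eventually_ge_atTop s] with i hi
  exact ⟨Φ (τ i - s) x, hK (sub_nonneg.2 hi) hx, by rw [← hadd, add_sub_cancel]⟩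

end ForwardAttractor

theorem flow_inward_attractor_general
    {n : ℕ}
    (D : Set (EuclideanSpace ℝ (Fin n))) (hDb : Bornology.IsBounded D)
    (F : EuclideanSpace ℝ (Fin n) → EuclideanSpace ℝ (Fin n))
    (LF : NNReal) (hF : LipschitzWith LF F)
    (hinward : ∀ p ∈ frontier D,
      (∀ v ∈ outwardNormals (closure D) p, (inner ℝ (F p) v : ℝ) ≤ 0) ∧
      (∃ v ∈ outwardNormals (closure D) p, (inner ℝ (F p) v : ℝ) < 0))
    (Φ : ℝ → EuclideanSpace ℝ (Fin n) → EuclideanSpace ℝ (Fin n))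
    (hΦ0 : ∀ x, Φ 0 x = x)
    (hΦode : ∀ x t, HasDerivAt (fun s => Φ s x) (F (Φ t x)) t) :
    (∀ t : ℝ, 0 < t → Φ t '' closure D ⊆ D) ∧
    IsCompact (⋂ t ∈ Set.Ici (0 : ℝ), Φ t '' closure D) ∧
    (⋂ t ∈ Set.Ici (0 : ℝ), Φ t '' closure D) ⊆ D ∧
    (∀ t : ℝ, Φ t '' (⋂ s ∈ Set.Ici (0 : ℝ), Φ s '' closure D) =
      ⋂ s ∈ Set.Ici (0 : ℝ), Φ s '' closure D) ∧
    (∀ x ∈ closure D, ∀ y : EuclideanSpace ℝ (Fin n),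
      (∃ tk : ℕ → ℝ, Tendsto tk atTop atTop ∧
        Tendsto (fun k => Φ (tk k) x) atTop (𝓝 y)) →
      y ∈ ⋂ s ∈ Set.Ici (0 : ℝ), Φ s '' closure D) := by
  have hΦ : IsFlowOf F Φ := ⟨hΦ0, hΦode⟩
  have hadd := hΦ.map_add hF
  have hcont : ∀ t, 0 ≤ t → Continuous (Φ t) := fun t ht => hΦ.continuous hF ht
  have hKc : IsCompact (closure D) := hDb.isCompact_closure
  have hinv := hΦ.isForwardInvariant_closure hF fun p hp => (hinward p hp).1
  have hentry : ∀ t, 0 < t → MapsTo (Φ t) (closure D) D := fun t ht =>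
    hΦ.mapsTo_closure_of_pos hinv (fun p hp => (hinward p hp).2) ht
  refine ⟨fun t ht => (hentry t ht).image_subset, isCompact_forwardAttractor hΦ0 hKc hcont,
    (forwardAttractor_subset_image zero_le_one).trans (hentry 1 one_pos).image_subset,
    image_forwardAttractor hΦ0 hadd hinv, ?_⟩
  rintro x hx y ⟨tk, htk, hy⟩
  exact mem_forwardAttractor_of_tendsto hadd hinv hKc hcont hx htk hy

/-- if the bounded open set `D` satisfies the exterior sphere condition and the
Lipschitz vector field `F` points inward `D`, then the flow `Φ` of `F` maps `K = closure D`
into `D` at every positive time, and `A = ⋂_{t ≥ 0} Φ_t(K)` is a compact subset of `D`,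
invariant under the flow, containing the ω-limit set of every point of `K`. -/
theorem flow_inward_attractor
    {n : ℕ}
    (D : Set (EuclideanSpace ℝ (Fin n))) (hD : IsOpen D) (hDb : Bornology.IsBounded D)
    (hsphere : ∀ p ∈ frontier D, (outwardNormals (closure D) p).Nonempty)
    (F : EuclideanSpace ℝ (Fin n) → EuclideanSpace ℝ (Fin n))
    (LF : NNReal) (hF : LipschitzWith LF F)
    (hinward : ∀ p ∈ frontier D,
      (∀ v ∈ outwardNormals (closure D) p, (inner ℝ (F p) v : ℝ) ≤ 0) ∧
      (∃ v ∈ outwardNormals (closure D) p, (inner ℝ (F p) v : ℝ) < 0))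
    (Φ : ℝ → EuclideanSpace ℝ (Fin n) → EuclideanSpace ℝ (Fin n))
    (hΦ0 : ∀ x, Φ 0 x = x)
    (hΦode : ∀ x t, HasDerivAt (fun s => Φ s x) (F (Φ t x)) t) :
    (∀ t : ℝ, 0 < t → Φ t '' closure D ⊆ D) ∧
    IsCompact (⋂ t ∈ Set.Ici (0 : ℝ), Φ t '' closure D) ∧
    (⋂ t ∈ Set.Ici (0 : ℝ), Φ t '' closure D) ⊆ D ∧
    (∀ t : ℝ, Φ t '' (⋂ s ∈ Set.Ici (0 : ℝ), Φ s '' closure D) =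
      ⋂ s ∈ Set.Ici (0 : ℝ), Φ s '' closure D) ∧
    (∀ x ∈ closure D, ∀ y : EuclideanSpace ℝ (Fin n),
      (∃ tk : ℕ → ℝ, Tendsto tk atTop atTop ∧
        Tendsto (fun k => Φ (tk k) x) atTop (𝓝 y)) →
      y ∈ ⋂ s ∈ Set.Ici (0 : ℝ), Φ s '' closure D) :=
  flow_inward_attractor_general D hDb F LF hF hinward Φ hΦ0 hΦode
end

section
/- Let D ⊆ ℝⁿ be a bounded open set with closure K satisfying the strong exterior sphere condition, let p ∈ ∂D, and let s₀, s₁, …, s_m ∈ ℝⁿ be given vectors. Then the following two conditions are equivalent: (a) N_p ∩ (−N_p) = ∅ and for every v ∈ N_p one has ⟨s₀, v⟩ < 0 or Σ_{i=1}^m ⟨s_i, v⟩² ≠ 0; (b) there exists a vector w in the linear span of {s₁, …, s_m} such that ⟨s₀ + w, v⟩ < 0 for every v ∈ N_p. -/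
/-!
With a uniform exterior radius `R`, a unit vector `v` is an outward normal at `p` iff `R • v` lies
in the closed convex set of offsets `u` for which the ball of radius `‖u‖` about `p + u` misses
`K = closure D`. Hence `N_p` is compact, every nonzero point of its convex hull is a positive
multiple of a normal, and `N_p ∩ -N_p = ∅` keeps `0` out of the hull. Condition (a) then says that
the image of this compact convex hull under `u ↦ (⟪s₀, u⟫, (⟪sᵢ, u⟫)ᵢ)` misses the ray
`[0, ∞) × {0}`. A separating functional `(x, y) ↦ c x + ∑ aᵢ yᵢ` has `c ≥ 0`, and `w` is
`c⁻¹ ∑ aᵢ sᵢ`, or a large multiple of `∑ aᵢ sᵢ` when `c = 0`.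
-/

open Set Metric

open Submodule RealInnerProductSpace

theorem isCompact_convexHull {E : Type*} [NormedAddCommGroup E]
    [NormedSpace ℝ E] [FiniteDimensional ℝ E] {s : Set E} (hs : IsCompact s) :
    IsCompact (convexHull ℝ s) := by
  rcases s.eq_empty_or_nonempty with rfl | ⟨x₀, hx₀⟩
  · simp
  let d := Module.finrank ℝ E + 1
  suffices convexHull ℝ s = (fun q : (Fin d → ℝ) × (Fin d → E) => ∑ i, q.1 i • q.2 i) ''
      (stdSimplex ℝ (Fin d) ×ˢ univ.pi fun _ => s) by
    rw [this]
    exact ((isCompact_stdSimplex ℝ _).prod (isCompact_univ_pi fun _ => hs)).image (by fun_prop)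
  refine Subset.antisymm (fun x hx => ?_) ?_
  · -- Carathéodory: `x` is a convex combination of at most `d` points of `s`, padded to `d`.
    obtain ⟨ι, _, z, w, hzs, hind, hw, hw1, rfl⟩ := eq_pos_convex_span_of_mem_convexHull hx
    obtain ⟨e⟩ : Nonempty (ι ↪ Fin d) := Function.Embedding.nonempty_of_card_le <| by
      simpa using hind.card_le_finrank_succ.trans (Nat.succ_le_succ (Submodule.finrank_le _))
    let w' : Fin d → ℝ := Function.extend e w 0
    let z' : Fin d → E := Function.extend e z fun _ => x₀
    have hw' : ∀ j, j ∉ range e → w' j = 0 := fun j hj => Function.extend_apply' _ _ _ hj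
    refine ⟨(w', z'), ⟨⟨fun j => ?_, ?_⟩, fun j _ => ?_⟩, ?_⟩
    · by_cases hj : j ∈ range e
      · obtain ⟨i, rfl⟩ := hj
        simpa [w', e.injective.extend_apply] using (hw i).le
      · simp [hw' j hj]
    · rw [← hw1]
      exact (Fintype.sum_of_injective e e.injective w w' hw' fun i =>
        (e.injective.extend_apply _ _ i).symm).symm
    · by_cases hj : j ∈ range e
      · obtain ⟨i, rfl⟩ := hj
        simpa [z', e.injective.extend_apply] using hzs (mem_range_self i)
      · simpa [z', Function.extend_apply' _ _ _ hj] using hx₀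
    · refine (Fintype.sum_of_injective e e.injective _ _ (fun j hj => ?_) fun i => ?_).symm
      · simp [hw' j hj]
      · simp [w', z', e.injective.extend_apply]
  · rintro _ ⟨⟨w, z⟩, ⟨hw, hz⟩, rfl⟩
    exact (convex_convexHull ℝ s).sum_mem (fun i _ => hw.1 i) hw.2
      fun i _ => subset_convexHull ℝ s (hz i trivial)

theorem exists_neg_smul_mem_of_zero_mem_convexHull {E : Type*} [AddCommGroup E] [Module ℝ E]
    {S N : Set E} (hS : Convex ℝ S) (hS₀ : (0 : E) ∈ S) (hNS : N ⊆ S)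
    (hN : (0 : E) ∈ convexHull ℝ N) : ∃ z ∈ N, ∃ t : ℝ, 0 < t ∧ -(t • z) ∈ S := by
  classical
  obtain ⟨ι, _, z, w, hzN, -, hw, hw1, hsum⟩ := eq_pos_convex_span_of_mem_convexHull hN
  obtain ⟨j⟩ : Nonempty ι := by
    by_contra h
    simp [not_nonempty_iff.1 h] at hw1
  refine ⟨z j, hzN (mem_range_self j), w j, hw j, ?_⟩
  -- `-(w j • z j)` is the combination with `z j` replaced by `0 ∈ S`.
  have hrepl : -(w j • z j) = ∑ i, w i • Function.update z j 0 i := by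
    simp only [Function.apply_update (fun i => (w i • · : E → E)), smul_zero,
      Finset.sum_update_of_mem (Finset.mem_univ j)]
    have hsplit := Finset.sum_eq_add_sum_sdiff_singleton_of_mem (Finset.mem_univ j)
      fun i => w i • z i
    rw [hsum] at hsplit
    rw [zero_add, neg_eq_iff_add_eq_zero]
    exact hsplit.symm
  rw [hrepl]
  refine hS.sum_mem (fun i _ => (hw i).le) hw1 fun i _ => ?_
  rcases eq_or_ne i j with rfl | hij
  · simpa using hS₀
  · simpa [Function.update_of_ne hij] using hNS (hzN (mem_range_self i))

theorem LinearMap.nonneg_of_forall_lt_apply_smul {F : Type*} [AddCommGroup F] [Module ℝ F]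
    (f : F →ₗ[ℝ] ℝ) {x : F} {b : ℝ} (h : ∀ t : ℝ, 0 ≤ t → b < f (t • x)) : 0 ≤ f x := by
  by_contra! hfx
  have := h (|b| / -f x) (div_nonneg (abs_nonneg b) (neg_nonneg.2 hfx.le))
  rw [map_smul, smul_eq_mul, div_mul_eq_mul_div, div_neg, mul_div_cancel_right₀ _ hfx.ne] at this
  linarith [neg_abs_le b]

section InnerProductSpace

variable {E : Type*} [NormedAddCommGroup E] [InnerProductSpace ℝ E]

theorem exists_forall_inner_add_smul_neg {C : Set E} (hC : Bornology.IsBounded C) {s₀ w₀ : E}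
    {c a : ℝ} (hc : 0 ≤ c) (ha : a < 0) (h : ∀ u ∈ C, c * ⟪s₀, u⟫ + ⟪w₀, u⟫ < a) :
    ∃ t : ℝ, ∀ u ∈ C, ⟪s₀ + t • w₀, u⟫ < 0 := by
  rcases hc.eq_or_lt with rfl | hc
  · obtain ⟨M, hM, hCM⟩ := hC.exists_pos_norm_le
    refine ⟨(‖s₀‖ * M + 1) / -a, fun u hu => ?_⟩
    have hw₀ : ⟪w₀, u⟫ < a := by simpa using h u hu
    have hs₀ : ⟪s₀, u⟫ ≤ ‖s₀‖ * M :=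
      (real_inner_le_norm s₀ u).trans (mul_le_mul_of_nonneg_left (hCM u hu) (norm_nonneg s₀))
    have ht : 0 < (‖s₀‖ * M + 1) / -a := div_pos (by positivity) (neg_pos.2 ha)
    calc ⟪s₀ + ((‖s₀‖ * M + 1) / -a) • w₀, u⟫
        = ⟪s₀, u⟫ + (‖s₀‖ * M + 1) / -a * ⟪w₀, u⟫ := by
          rw [inner_add_left, real_inner_smul_left]
      _ < ‖s₀‖ * M + 1 + (‖s₀‖ * M + 1) / -a * a := by gcongr; linarith
      _ = 0 := by rw [div_neg, neg_mul, div_mul_cancel₀ _ ha.ne]; ring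
  · refine ⟨c⁻¹, fun u hu => ?_⟩
    have : ⟪s₀ + c⁻¹ • w₀, u⟫ = c⁻¹ * (c * ⟪s₀, u⟫ + ⟪w₀, u⟫) := by
      rw [inner_add_left, real_inner_smul_left]
      field_simp
    rw [this]
    exact mul_neg_of_pos_of_neg (inv_pos.2 hc) ((h u hu).trans ha)

theorem exists_mem_span_forall_inner_neg_of_convex {ι : Type*} [Fintype ι] {C : Set E}
    (hC : IsCompact C) (hCc : Convex ℝ C) (s₀ : E) (s : ι → E)
    (h : ∀ u ∈ C, ⟪s₀, u⟫ < 0 ∨ ∃ i, ⟪s i, u⟫ ≠ 0) :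
    ∃ w ∈ span ℝ (range s), ∀ u ∈ C, ⟪s₀ + w, u⟫ < 0 := by
  classical
  let T : E →L[ℝ] ℝ × (ι → ℝ) :=
    (innerSL ℝ s₀).prod (ContinuousLinearMap.pi fun i => innerSL ℝ (s i))
  have hdisj : Disjoint (T '' C) (Ici 0 ×ˢ {0}) := by
    rw [disjoint_left]
    rintro _ ⟨u, hu, rfl⟩ ⟨hs₀, hs⟩
    simp only [T, mem_Ici, mem_singleton_iff, ContinuousLinearMap.prod_apply, innerSL_apply_apply,
      ContinuousLinearMap.pi_apply, funext_iff, Pi.zero_apply] at hs₀ hs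
    rcases h u hu with hneg | ⟨i, hi⟩
    · exact hneg.not_ge hs₀
    · exact hi (hs i)
  obtain ⟨f, a, b, hfC, hab, hfB⟩ := geometric_hahn_banach_compact_closed
    (hCc.linear_image T.toLinearMap) (hC.image T.continuous)
    ((convex_Ici 0).prod (convex_singleton 0)) (isClosed_Ici.prod isClosed_singleton) hdisj
  have hb : b < 0 := by simpa using hfB 0 ⟨self_mem_Ici, rfl⟩
  have hc : 0 ≤ f (1, 0) := f.toLinearMap.nonneg_of_forall_lt_apply_smul fun t ht =>
    hfB _ ⟨by simpa using ht, by simp⟩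
  let w₀ := ∑ i, f (0, Pi.single i 1) • s i
  have hw₀ : w₀ ∈ span ℝ (range s) :=
    sum_mem fun i _ => smul_mem _ _ (subset_span (mem_range_self i))
  have hfT : ∀ u, f (T u) = f (1, 0) * ⟪s₀, u⟫ + ⟪w₀, u⟫ := by
    intro u
    have hT : T u = ⟪s₀, u⟫ • ((1 : ℝ), (0 : ι → ℝ)) +
        ∑ i, ⟪s i, u⟫ • ((0 : ℝ), (Pi.single i 1 : ι → ℝ)) := by
      ext j
      · simp [T, Prod.fst_sum]
      · simp [T, Prod.snd_sum, Pi.single_apply]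
    rw [hT, map_add, map_smul, map_sum]
    simp only [map_smul, smul_eq_mul, w₀, sum_inner, real_inner_smul_left, mul_comm]
  obtain ⟨t, ht⟩ := exists_forall_inner_add_smul_neg hC.isBounded hc (hab.trans hb)
    fun u hu => hfT u ▸ hfC _ (mem_image_of_mem T hu)
  exact ⟨t • w₀, smul_mem _ _ hw₀, ht⟩

theorem exists_mem_span_forall_inner_neg_of_pos_smul_mem [FiniteDimensional ℝ E] {ι : Type*}
    [Fintype ι] {N : Set E} (hN : IsCompact N)
    (hcone : ∀ u ∈ convexHull ℝ N, ∃ c : ℝ, 0 < c ∧ c • u ∈ N)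
    (s₀ : E) (s : ι → E) (h : ∀ v ∈ N, ⟪s₀, v⟫ < 0 ∨ ∃ i, ⟪s i, v⟫ ≠ 0) :
    ∃ w ∈ span ℝ (range s), ∀ v ∈ N, ⟪s₀ + w, v⟫ < 0 := by
  obtain ⟨w, hw, hneg⟩ := exists_mem_span_forall_inner_neg_of_convex
    (isCompact_convexHull hN) (convex_convexHull ℝ N) s₀ s fun u hu => by
      obtain ⟨c, hc, hcu⟩ := hcone u hu
      simpa [inner_smul_right, hc.ne', mul_neg_iff, hc, hc.not_gt] using h _ hcu
  exact ⟨w, hw, fun v hv => hneg v (subset_convexHull ℝ N hv)⟩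

theorem inner_eq_zero_of_mem_span {ι : Type*} {s : ι → E} {w v : E} (hw : w ∈ span ℝ (range s))
    (hv : ∀ i, ⟪s i, v⟫ = 0) : ⟪w, v⟫ = 0 := by
  have : span ℝ (range s) ≤ (ℝ ∙ v)ᗮ :=
    span_le.2 <| range_subset_iff.2 fun i => mem_orthogonal_singleton_iff_inner_left.2 (hv i)
  exact mem_orthogonal_singleton_iff_inner_left.1 (this hw)

/-- Offsets `u` such that the open ball of radius `‖u‖` about `p + u` misses `K`, since
`‖x - (p + u)‖² = ‖x - p‖² - 2 ⟪x - p, u⟫ + ‖u‖²`. -/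
def exteriorBallOffsets (K : Set E) (p : E) : Set E :=
  {u | ∀ x ∈ K, 2 * ⟪x - p, u⟫ ≤ ‖x - p‖ ^ 2}

variable {K : Set E} {p : E}

theorem zero_mem_exteriorBallOffsets : (0 : E) ∈ exteriorBallOffsets K p := fun x _ => by
  simp

theorem convex_exteriorBallOffsets : Convex ℝ (exteriorBallOffsets K p) := by
  intro u hu v hv a b ha hb hab x hx
  rw [inner_add_right, real_inner_smul_right, real_inner_smul_right]
  nlinarith [mul_le_mul_of_nonneg_left (hu x hx) ha, mul_le_mul_of_nonneg_left (hv x hx) hb]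

theorem isClosed_exteriorBallOffsets : IsClosed (exteriorBallOffsets K p) := by
  simp only [exteriorBallOffsets, ofPred_forall]
  exact isClosed_biInter fun x _ => isClosed_le (by fun_prop) continuous_const

theorem infDist_add_eq_norm_iff (hp : p ∈ K) {u : E} :
    infDist (p + u) K = ‖u‖ ↔ u ∈ exteriorBallOffsets K p := by
  have hdist : ∀ x, dist (p + u) x ^ 2 = ‖x - p‖ ^ 2 - 2 * ⟪x - p, u⟫ + ‖u‖ ^ 2 := fun x => by
    rw [dist_eq_norm, show p + u - x = u - (x - p) by abel, norm_sub_sq_real, real_inner_comm]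
    ring
  have hle : infDist (p + u) K ≤ ‖u‖ := by simpa using infDist_le_dist_of_mem (x := p + u) hp
  rw [le_antisymm_iff, and_iff_right hle, le_infDist ⟨p, hp⟩]
  refine forall₂_congr fun x _ => ?_
  rw [← sq_le_sq₀ (norm_nonneg u) dist_nonneg, hdist]
  constructor <;> intro h <;> linarith

end InnerProductSpace

section OutwardNormals

variable {n : ℕ} {K : Set (EuclideanSpace ℝ (Fin n))} {p : EuclideanSpace ℝ (Fin n)}

theorem mem_outwardNormals_iff (hp : p ∈ K) {v : EuclideanSpace ℝ (Fin n)} :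
    v ∈ outwardNormals K p ↔ ‖v‖ = 1 ∧ ∃ r : ℝ, 0 < r ∧ r • v ∈ exteriorBallOffsets K p := by
  refine and_congr_right fun hv => exists_congr fun r => and_congr_right fun hr => ?_
  rw [← infDist_add_eq_norm_iff hp, norm_smul, hv, mul_one, Real.norm_of_nonneg hr.le]

variable {R : ℝ}

theorem outwardNormals_eq_of_uniform (hp : p ∈ K) (hR : 0 < R)
    (hunif : ∀ v ∈ outwardNormals K p, ∃ r, R ≤ r ∧ infDist (p + r • v) K = r) :
    outwardNormals K p = sphere 0 1 ∩ (R • ·) ⁻¹' exteriorBallOffsets K p := by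
  ext v
  refine ⟨fun hv => ⟨by simpa using hv.1, ?_⟩, fun ⟨hv, hRv⟩ =>
    (mem_outwardNormals_iff hp).2 ⟨by simpa using hv, R, hR, hRv⟩⟩
  obtain ⟨r, hRr, hr⟩ := hunif v hv
  have hr0 : 0 < r := hR.trans_le hRr
  have hrv : r • v ∈ exteriorBallOffsets K p := by
    rwa [← infDist_add_eq_norm_iff hp, norm_smul, hv.1, mul_one, Real.norm_of_nonneg hr0.le]
  have := convex_exteriorBallOffsets.smul_mem_of_zero_mem zero_mem_exteriorBallOffsets hrv
    ⟨div_nonneg hR.le hr0.le, (div_le_one hr0).2 hRr⟩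
  rwa [smul_smul, div_mul_cancel₀ _ hr0.ne'] at this

theorem isCompact_outwardNormals_of_uniform (hp : p ∈ K) (hR : 0 < R)
    (hunif : ∀ v ∈ outwardNormals K p, ∃ r, R ≤ r ∧ infDist (p + r • v) K = r) :
    IsCompact (outwardNormals K p) := by
  rw [outwardNormals_eq_of_uniform hp hR hunif]
  exact (isCompact_sphere 0 1).inter_right
    (isClosed_exteriorBallOffsets.preimage (continuous_const_smul R))

theorem exists_pos_smul_mem_outwardNormals_of_mem_convexHull (hp : p ∈ K) (hR : 0 < R)
    (hunif : ∀ v ∈ outwardNormals K p, ∃ r, R ≤ r ∧ infDist (p + r • v) K = r)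
    (hanti : ∀ v ∈ outwardNormals K p, -v ∉ outwardNormals K p) :
    ∀ u ∈ convexHull ℝ (outwardNormals K p), ∃ c : ℝ, 0 < c ∧ c • u ∈ outwardNormals K p := by
  let S := (R • ·) ⁻¹' exteriorBallOffsets K p
  have hS : Convex ℝ S := convex_exteriorBallOffsets.smul_preimage R
  have hNS : outwardNormals K p ⊆ S := by
    rw [outwardNormals_eq_of_uniform hp hR hunif]
    exact inter_subset_right
  intro u hu
  rcases eq_or_ne u 0 with rfl | hu0
  · obtain ⟨z, hz, t, ht, hzt⟩ := exists_neg_smul_mem_of_zero_mem_convexHull hS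
      (by simpa [S] using zero_mem_exteriorBallOffsets) hNS hu
    refine absurd ((mem_outwardNormals_iff hp).2 ⟨by simpa using hz.1, R * t, by positivity, ?_⟩)
      (hanti z hz)
    simpa [S, smul_smul] using hzt
  · refine ⟨‖u‖⁻¹, by positivity, (mem_outwardNormals_iff hp).2
      ⟨norm_smul_inv_norm hu0, R * ‖u‖, by positivity, ?_⟩⟩
    rw [smul_smul, mul_assoc, mul_inv_cancel₀ (norm_ne_zero_iff.2 hu0), mul_one]
    exact convexHull_min hNS hS hu

end OutwardNormals

theorem inward_pointing_characterization_general
    {n m : ℕ}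
    (D : Set (EuclideanSpace ℝ (Fin n)))
    (hstrong : ∃ R : ℝ, 0 < R ∧ ∀ q ∈ frontier D, ∀ v ∈ outwardNormals (closure D) q,
      ∃ r : ℝ, R ≤ r ∧ Metric.infDist (q + r • v) (closure D) = r)
    (p : EuclideanSpace ℝ (Fin n)) (hp : p ∈ frontier D)
    (s0 : EuclideanSpace ℝ (Fin n)) (s : Fin m → EuclideanSpace ℝ (Fin n)) :
    ((∀ v ∈ outwardNormals (closure D) p, -v ∉ outwardNormals (closure D) p) ∧
      ∀ v ∈ outwardNormals (closure D) p,
        (inner ℝ s0 v : ℝ) < 0 ∨ (∑ i : Fin m, (inner ℝ (s i) v : ℝ) ^ 2) ≠ 0) ↔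
    (∃ w ∈ Submodule.span ℝ (Set.range s),
      ∀ v ∈ outwardNormals (closure D) p, (inner ℝ (s0 + w) v : ℝ) < 0) := by
  obtain ⟨R, hR, hunif⟩ := hstrong
  have hpK : p ∈ closure D := frontier_subset_closure hp
  have hunifp := hunif p hp
  have hsum : ∀ v, ∑ i, ⟪s i, v⟫ ^ 2 = 0 ↔ ∀ i, ⟪s i, v⟫ = 0 := fun v => by
    simp [Finset.sum_eq_zero_iff_of_nonneg fun i _ => sq_nonneg ⟪s i, v⟫]
  constructor
  · rintro ⟨hanti, hdir⟩
    refine exists_mem_span_forall_inner_neg_of_pos_smul_mem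
      (isCompact_outwardNormals_of_uniform hpK hR hunifp)
      (exists_pos_smul_mem_outwardNormals_of_mem_convexHull hpK hR hunifp hanti) s0 s
      fun v hv => ?_
    simpa [hsum] using hdir v hv
  · rintro ⟨w, hw, hneg⟩
    refine ⟨fun v hv hv' => ?_, fun v hv => ?_⟩
    · have := hneg (-v) hv'
      rw [inner_neg_right] at this
      linarith [hneg v hv]
    · by_contra! h
      have := hneg v hv
      rw [inner_add_left, inner_eq_zero_of_mem_span hw ((hsum v).1 h.2)] at this
      linarith [h.1]

/-- for a bounded open set `D` satisfying the strong exterior sphere condition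
(uniform radius `R > 0`), a boundary point `p`, and vectors `s₀, s₁, …, s_m`, the following
are equivalent: (a) `N_p ∩ (−N_p) = ∅` and for every `v ∈ N_p`, `⟪s₀,v⟫ < 0` or
`∑ᵢ ⟪sᵢ,v⟫² ≠ 0`; (b) there exists `w ∈ span{s₁,…,s_m}` with `⟪s₀ + w, v⟫ < 0` for every
`v ∈ N_p`. -/
theorem inward_pointing_characterization
    {n m : ℕ}
    (D : Set (EuclideanSpace ℝ (Fin n))) (hD : IsOpen D) (hDb : Bornology.IsBounded D)
    (hsphere : ∀ q ∈ frontier D, (outwardNormals (closure D) q).Nonempty)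
    (hstrong : ∃ R : ℝ, 0 < R ∧ ∀ q ∈ frontier D, ∀ v ∈ outwardNormals (closure D) q,
      ∃ r : ℝ, R ≤ r ∧ Metric.infDist (q + r • v) (closure D) = r)
    (p : EuclideanSpace ℝ (Fin n)) (hp : p ∈ frontier D)
    (s0 : EuclideanSpace ℝ (Fin n)) (s : Fin m → EuclideanSpace ℝ (Fin n)) :
    ((∀ v ∈ outwardNormals (closure D) p, -v ∉ outwardNormals (closure D) p) ∧
      ∀ v ∈ outwardNormals (closure D) p,
        (inner ℝ s0 v : ℝ) < 0 ∨ (∑ i : Fin m, (inner ℝ (s i) v : ℝ) ^ 2) ≠ 0) ↔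
    (∃ w ∈ Submodule.span ℝ (Set.range s),
      ∀ v ∈ outwardNormals (closure D) p, (inner ℝ (s0 + w) v : ℝ) < 0) :=
  inward_pointing_characterization_general D hstrong p hp s0 s
end

section
/- Let D ⊆ ℝⁿ be an open set with compact closure K, and let η_n, η : [0,∞) → ℝⁿ be continuous paths with η_n → η uniformly on every compact time interval and η(0) ∈ K. Then: (a) limsup_{n→∞} τ_K^out(η_n) ≤ τ_K^out(η); (b) for every continuous f : K → [0,∞) vanishing on K∖D and every t ≥ 0, limsup_{n→∞} F_n(t) ≤ F(t), where F_n(t) equals f(η_n(t)) if τ_K^out(η_n) > t and 0 otherwise, and F(t) equals f(η(t)) if τ_K^out(η) > t and 0 otherwise. -/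
open Set Filter Topology
open scoped ENNReal Classical

/-- The exit time of the path `η` from the set `A`, as an extended nonnegative real:
`τ_A^out(η) = inf {t ≥ 0 : η t ∉ A}`, with `inf ∅ = ∞`. -/
noncomputable def exitTime {E : Type*} (A : Set E) (η : ℝ → E) : ℝ≥0∞ :=
  sInf {s : ℝ≥0∞ | ∃ t : ℝ, 0 ≤ t ∧ η t ∉ A ∧ s = ENNReal.ofReal t}

/-!
A path that has left the closed set `K` by time `t` is seen outside `K` at some time `s ≤ t`,
and uniformly close paths are outside `K` at that same time, so exit times can only drop in the
limit. For the killed observables `f(η t) 1_{τ_K(η) > t}`, upper semicontinuity of `f` on `K` handles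
every case except a limit path which stays in `K` up to time `t` but has exit time `≤ t`; by
continuity `η t` then cannot lie in the open set `D`, so `f(η t) = 0`.
-/

section ExitTime

variable {E : Type*} {A : Set E} {γ : ℝ → E} {t : ℝ}

theorem exitTime_le_ofReal (ht : 0 ≤ t) (hγ : γ t ∉ A) : exitTime A γ ≤ ENNReal.ofReal t :=
  sInf_le ⟨t, ht, hγ, rfl⟩

theorem ofReal_le_exitTime_iff :
    ENNReal.ofReal t ≤ exitTime A γ ↔ ∀ s, 0 ≤ s → γ s ∉ A → t ≤ s := by
  refine ⟨fun h s hs hγ => ?_, fun h => le_sInf ?_⟩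
  · exact (ENNReal.ofReal_le_ofReal_iff hs).1 (h.trans (exitTime_le_ofReal hs hγ))
  · rintro _ ⟨s, hs, hγ, rfl⟩
    exact ENNReal.ofReal_le_ofReal (h s hs hγ)

theorem mem_of_ofReal_lt_exitTime (ht : 0 ≤ t) (h : ENNReal.ofReal t < exitTime A γ) : γ t ∈ A :=
  by_contra fun hγ => (exitTime_le_ofReal ht hγ).not_gt h

variable [TopologicalSpace E]

theorem ofReal_lt_exitTime_of_mem_interior (ht : 0 ≤ t)
    (hγ : ContinuousWithinAt γ (Ici 0) t) (hA : ∀ s ∈ Icc 0 t, γ s ∈ A)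
    (hint : γ t ∈ interior A) : ENNReal.ofReal t < exitTime A γ := by
  have hnear : ∀ᶠ s in 𝓝[≥] t, γ s ∈ A :=
    ((hγ.eventually_mem (isOpen_interior.mem_nhds hint)).filter_mono
      (nhdsWithin_mono t (Ici_subset_Ici.2 ht))).mono fun _ hs => interior_subset hs
  obtain ⟨u, htu, hIco⟩ := mem_nhdsGE_iff_exists_Ico_subset.1 hnear
  have hu : ENNReal.ofReal u ≤ exitTime A γ := by
    refine ofReal_le_exitTime_iff.2 fun s hs hγs => not_lt.1 fun hsu => hγs ?_
    rcases le_or_gt s t with hst | hts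
    · exact hA s ⟨hs, hst⟩
    · exact hIco ⟨hts.le, hsu⟩
  exact ((ENNReal.ofReal_lt_ofReal_iff (ht.trans_lt htu)).2 htu).trans_le hu

variable {ι : Type*} {l : Filter ι} {γs : ι → ℝ → E}

theorem eventually_exitTime_le_ofReal (hA : IsClosed A)
    (hconv : ∀ s, 0 ≤ s → Tendsto (fun k => γs k s) l (𝓝 (γ s)))
    {s : ℝ} (hs : s ∈ Icc 0 t) (hγ : γ s ∉ A) :
    ∀ᶠ k in l, exitTime A (γs k) ≤ ENNReal.ofReal t :=
  (hconv s hs.1).eventually_mem (hA.isOpen_compl.mem_nhds hγ) |>.mono fun _ hk =>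
    (exitTime_le_ofReal hs.1 hk).trans (ENNReal.ofReal_le_ofReal hs.2)

theorem limsup_exitTime_le (hA : IsClosed A)
    (hconv : ∀ s, 0 ≤ s → Tendsto (fun k => γs k s) l (𝓝 (γ s))) :
    limsup (fun k => exitTime A (γs k)) l ≤ exitTime A γ := by
  refine le_sInf ?_
  rintro _ ⟨s, hs, hγ, rfl⟩
  exact limsup_le_of_le (by isBoundedDefault)
    (eventually_exitTime_le_ofReal hA hconv ⟨hs, le_rfl⟩ hγ)

end ExitTime

section KilledValue

noncomputable def killedValue {E : Type*} (A : Set E) (f : E → ℝ) (γ : ℝ → E) (t : ℝ) : ℝ :=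
  if ENNReal.ofReal t < exitTime A γ then f (γ t) else 0

variable {E : Type*} {A : Set E} {f : E → ℝ} {γ : ℝ → E} {t : ℝ}

theorem killedValue_nonneg (hf0 : ∀ x ∈ A, 0 ≤ f x) (ht : 0 ≤ t) : 0 ≤ killedValue A f γ t := by
  unfold killedValue
  split_ifs with h
  exacts [hf0 _ (mem_of_ofReal_lt_exitTime ht h), le_rfl]

theorem killedValue_of_exitTime_le (h : exitTime A γ ≤ ENNReal.ofReal t) :
    killedValue A f γ t = 0 :=
  if_neg h.not_gt

theorem killedValue_of_ofReal_lt_exitTime (h : ENNReal.ofReal t < exitTime A γ) :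
    killedValue A f γ t = f (γ t) :=
  if_pos h

variable [TopologicalSpace E] {ι : Type*} {l : Filter ι} [l.NeBot] {γs : ι → ℝ → E}

theorem limsup_killedValue_le {x : E} (hf0 : ∀ x ∈ A, 0 ≤ f x) (hx : x ∈ A)
    (hf : ContinuousWithinAt f A x) (ht : 0 ≤ t) (hconv : Tendsto (fun k => γs k t) l (𝓝 x)) :
    limsup (fun k => killedValue A f (γs k) t) l ≤ f x := by
  refine le_of_forall_pos_le_add fun ε hε => limsup_le_of_le
    (isCoboundedUnder_le_of_le l fun k => killedValue_nonneg hf0 ht) ?_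
  have hclose : ∀ᶠ y in 𝓝 x, y ∈ A → f y < f x + ε :=
    eventually_nhdsWithin_iff.1 (hf.eventually (Iio_mem_nhds (by linarith)))
  filter_upwards [hconv.eventually hclose] with k hk
  unfold killedValue
  split_ifs with h
  · exact (hk (mem_of_ofReal_lt_exitTime ht h)).le
  · linarith [hf0 x hx]

theorem limsup_killedValue_le_killedValue (hA : IsClosed A)
    (hconv : ∀ s, 0 ≤ s → Tendsto (fun k => γs k s) l (𝓝 (γ s)))
    (hγ : ContinuousOn γ (Ici 0)) (hf : ContinuousOn f A) (hf0 : ∀ x ∈ A, 0 ≤ f x)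
    (hfr : ∀ x ∈ frontier A, f x = 0) (ht : 0 ≤ t) :
    limsup (fun k => killedValue A f (γs k) t) l ≤ killedValue A f γ t := by
  by_cases hexit : ∃ s ∈ Icc 0 t, γ s ∉ A
  · obtain ⟨s, hs, hγs⟩ := hexit
    rw [killedValue_of_exitTime_le
      ((exitTime_le_ofReal hs.1 hγs).trans (ENNReal.ofReal_le_ofReal hs.2))]
    refine limsup_le_of_le (isCoboundedUnder_le_of_le l fun k => killedValue_nonneg hf0 ht) ?_
    filter_upwards [eventually_exitTime_le_ofReal hA hconv hs hγs] with k hk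
    exact (killedValue_of_exitTime_le hk).le
  push Not at hexit
  have hγt : γ t ∈ A := hexit t ⟨ht, le_rfl⟩
  refine (limsup_killedValue_le hf0 hγt (hf _ hγt) ht (hconv t ht)).trans ?_
  by_cases hint : γ t ∈ interior A
  · exact (killedValue_of_ofReal_lt_exitTime
      (ofReal_lt_exitTime_of_mem_interior ht (hγ t ht) hexit hint)).ge
  · rw [hfr _ (hA.frontier_eq ▸ ⟨hγt, hint⟩)]
    exact killedValue_nonneg hf0 ht

end KilledValue

theorem exit_time_upper_semicontinuity_closure_general
    {n : ℕ} (D : Set (EuclideanSpace ℝ (Fin n))) (hD : IsOpen D)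
    (η : ℕ → ℝ → EuclideanSpace ℝ (Fin n)) (ηl : ℝ → EuclideanSpace ℝ (Fin n))
    (hcontl : ContinuousOn ηl (Set.Ici (0 : ℝ)))
    (hconv : ∀ T : ℝ, 0 ≤ T →
      TendstoUniformlyOn (fun k t => η k t) ηl atTop (Set.Icc 0 T)) :
    (limsup (fun k => exitTime (closure D) (η k)) atTop ≤ exitTime (closure D) ηl) ∧
    (∀ f : EuclideanSpace ℝ (Fin n) → ℝ, ContinuousOn f (closure D) →
      (∀ x ∈ closure D, 0 ≤ f x) → (∀ x ∈ closure D \ D, f x = 0) →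
      ∀ t : ℝ, 0 ≤ t →
        limsup (fun k =>
            if ENNReal.ofReal t < exitTime (closure D) (η k) then f (η k t) else 0) atTop ≤
          (if ENNReal.ofReal t < exitTime (closure D) ηl then f (ηl t) else 0)) := by
  have hpointwise : ∀ s, 0 ≤ s → Tendsto (fun k => η k s) atTop (𝓝 (ηl s)) :=
    fun s hs => (hconv s hs).tendsto_at ⟨hs, le_rfl⟩
  have hfrontier : frontier (closure D) ⊆ closure D \ D := fun x hx =>
    ⟨isClosed_closure.frontier_subset hx, fun hxD => hx.2 (hD.subset_interior_closure hxD)⟩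
  refine ⟨limsup_exitTime_le isClosed_closure hpointwise, fun f hf hf0 hfD t ht => ?_⟩
  exact limsup_killedValue_le_killedValue isClosed_closure hpointwise hcontl hf hf0
    (fun x hx => hfD x (hfrontier hx)) ht

/-- for continuous paths `η_k → η` uniformly on compact time intervals with
`η 0 ∈ K = closure D` (`D` open with compact closure), (a) `limsup_k τ_K^out(η_k) ≤ τ_K^out(η)`,
and (b) for every continuous `f ≥ 0` on `K` vanishing on `K∖D` and every `t ≥ 0`,
`limsup_k f(η_k t) 1_{τ_K(η_k) > t} ≤ f(η t) 1_{τ_K(η) > t}`. -/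
theorem exit_time_upper_semicontinuity_closure
    {n : ℕ} (D : Set (EuclideanSpace ℝ (Fin n))) (hD : IsOpen D)
    (hK : IsCompact (closure D))
    (η : ℕ → ℝ → EuclideanSpace ℝ (Fin n)) (ηl : ℝ → EuclideanSpace ℝ (Fin n))
    (hcont : ∀ k, ContinuousOn (η k) (Set.Ici (0 : ℝ)))
    (hcontl : ContinuousOn ηl (Set.Ici (0 : ℝ)))
    (hconv : ∀ T : ℝ, 0 ≤ T →
      TendstoUniformlyOn (fun k t => η k t) ηl atTop (Set.Icc 0 T))
    (h0 : ηl 0 ∈ closure D) :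
    (limsup (fun k => exitTime (closure D) (η k)) atTop ≤ exitTime (closure D) ηl) ∧
    (∀ f : EuclideanSpace ℝ (Fin n) → ℝ, ContinuousOn f (closure D) →
      (∀ x ∈ closure D, 0 ≤ f x) → (∀ x ∈ closure D \ D, f x = 0) →
      ∀ t : ℝ, 0 ≤ t →
        limsup (fun k =>
            if ENNReal.ofReal t < exitTime (closure D) (η k) then f (η k t) else 0) atTop ≤
          (if ENNReal.ofReal t < exitTime (closure D) ηl then f (ηl t) else 0)) :=
  exit_time_upper_semicontinuity_closure_general D hD η ηl hcontl hconv
end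

section
/- Let λ > 1. Then there exists a unique θ ∈ (0, π) with λ sin θ = θ. Moreover, setting H(x) = sin(θx)/θ and ω = λ(1 + cos θ), one has ω > 0, H(x) > 0 for every x ∈ (0,1], and the identity −H'(x) + λ(H(1−x) − H(x)) = −ω H(x) holds for every x ∈ [0,1]. -/
/-!
Writing `λ sin θ = θ` as `sinc θ = λ⁻¹`, existence follows from the intermediate value theorem
(`sinc` runs from `1` at `0` to `0` at `π`), and uniqueness from the strict decrease of `sinc` on
`[0, π]`. Since `H' x = cos (θ x)` and `sin (θ (1 - x)) = sin θ cos (θ x) - cos θ sin (θ x)`, the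
eigenfunction identity reduces to `λ sin θ = θ`.
-/

open Set Real

namespace Real

theorem sinc_strictAntiOn : StrictAntiOn sinc (Icc 0 π) := by
  intro x hx y hy hxy
  have hy0 : y ≠ 0 := (hx.1.trans_lt hxy).ne'
  rw [sinc_of_ne_zero hy0]
  rcases hx.1.eq_or_lt with rfl | hx0
  · rw [sinc_zero, div_lt_one (hx.1.trans_lt hxy)]
    exact sin_lt (hx.1.trans_lt hxy)
  · -- secant slopes of the strictly concave `sin` from `sin 0 = 0` decrease
    have hsecant := strictConcaveOn_sin_Icc.secant_strict_mono (left_mem_Icc.2 pi_pos.le)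
      hx hy hx0.ne' hy0 hxy
    simpa [sinc_of_ne_zero hx0.ne'] using hsecant

theorem existsUnique_sinc_eq {c : ℝ} (hc : c ∈ Ioo 0 1) : ∃! θ, θ ∈ Ioo 0 π ∧ sinc θ = c := by
  have hc' : c ∈ Ioo (sinc π) (sinc 0) := by
    rwa [sinc_zero, sinc_of_ne_zero pi_ne_zero, sin_pi, zero_div]
  obtain ⟨θ, hθ, hθc⟩ := intermediate_value_Ioo' pi_pos.le continuous_sinc.continuousOn hc'
  refine ⟨θ, ⟨hθ, hθc⟩, fun φ ⟨hφ, hφc⟩ => ?_⟩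
  exact sinc_strictAntiOn.injOn (Ioo_subset_Icc_self hφ) (Ioo_subset_Icc_self hθ)
    (hφc.trans hθc.symm)

theorem mul_sin_eq_self_iff_sinc_eq {lam θ : ℝ} (hlam : lam ≠ 0) (hθ : θ ≠ 0) :
    lam * sin θ = θ ↔ sinc θ = lam⁻¹ := by
  rw [sinc_of_ne_zero hθ, div_eq_iff hθ, eq_inv_mul_iff_mul_eq₀ hlam]

theorem deriv_sin_mul_div {θ : ℝ} (hθ : θ ≠ 0) (x : ℝ) :
    deriv (fun y => sin (θ * y) / θ) x = cos (θ * x) := by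
  have h := (((hasDerivAt_id x).const_mul θ).sin.div_const θ).deriv
  simp only [id, mul_one] at h
  rw [h, mul_div_cancel_right₀ _ hθ]

end Real

theorem neg_deriv_add_mul_reflect_sub_eq {lam θ : ℝ} (hθ : θ ≠ 0) (hroot : lam * sin θ = θ)
    (x : ℝ) :
    -(deriv (fun y => sin (θ * y) / θ) x) + lam * (sin (θ * (1 - x)) / θ - sin (θ * x) / θ) =
      -(lam * (1 + cos θ)) * (sin (θ * x) / θ) := by
  rw [deriv_sin_mul_div hθ, mul_one_sub, sin_sub]
  field_simp
  linear_combination cos (θ * x) * hroot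

/-- for `λ > 1` there is a unique `θ ∈ (0, π)` with `λ sin θ = θ`; and for this
`θ`, setting `H(x) = sin(θx)/θ` and `ω = λ(1 + cos θ)`, one has `ω > 0`, `H > 0` on `(0,1]`,
and `−H'(x) + λ(H(1−x) − H(x)) = −ω H(x)` on `[0,1]`. -/
theorem pdmp_eigenfunction_identity_of_one_lt
    (lam : ℝ) (hlam : 1 < lam) :
    (∃! θ : ℝ, θ ∈ Set.Ioo 0 Real.pi ∧ lam * Real.sin θ = θ) ∧
    ∀ θ ∈ Set.Ioo 0 Real.pi, lam * Real.sin θ = θ →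
      0 < lam * (1 + Real.cos θ) ∧
      (∀ x ∈ Set.Ioc (0 : ℝ) 1, 0 < Real.sin (θ * x) / θ) ∧
      (∀ x ∈ Set.Icc (0 : ℝ) 1,
        -(deriv (fun y : ℝ => Real.sin (θ * y) / θ) x) +
          lam * (Real.sin (θ * (1 - x)) / θ - Real.sin (θ * x) / θ) =
        -(lam * (1 + Real.cos θ)) * (Real.sin (θ * x) / θ)) := by
  have hlam0 : 0 < lam := one_pos.trans hlam
  refine ⟨?_, fun θ hθ hroot => ⟨?_, fun x hx => ?_, fun x _ => ?_⟩⟩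
  · have hinv : lam⁻¹ ∈ Ioo 0 1 := ⟨inv_pos.2 hlam0, inv_lt_one_of_one_lt₀ hlam⟩
    convert existsUnique_sinc_eq hinv using 2 with θ
    exact and_congr_right fun hθ => mul_sin_eq_self_iff_sinc_eq hlam0.ne' hθ.1.ne'
  · have hcos : cos π < cos θ := cos_lt_cos_of_nonneg_of_le_pi hθ.1.le le_rfl hθ.2
    rw [cos_pi] at hcos
    exact mul_pos hlam0 (by linarith)
  · refine div_pos (sin_pos_of_pos_of_lt_pi (mul_pos hθ.1 hx.1) ?_) hθ.1
    calc θ * x ≤ θ := mul_le_of_le_one_right hθ.1.le hx.2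
      _ < π := hθ.2
  · exact neg_deriv_add_mul_reflect_sub_eq hθ.1.ne' hroot x
end

section
/- Let 0 < λ < 1. Then there exists a unique θ > 0 with λ sinh θ = θ. Moreover, setting H(x) = sinh(θx)/θ and ω = λ(1 + cosh θ), one has ω > 0, H(x) > 0 for every x ∈ (0,1], and the identity −H'(x) + λ(H(1−x) − H(x)) = −ω H(x) holds for every x ∈ [0,1]. (For λ = 1, the same identity holds with H(x) = x and ω = 2.) -/
open Set Real Filter Topology

/-!
The function `x ↦ sinh x / x` is the slope of the chord of `sinh` from the origin. Since `sinh`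
is strictly convex on `[0, ∞)` this slope is strictly increasing on `(0, ∞)`; it tends to
`sinh' 0 = 1` at `0⁺` and to `∞` at `∞`. So it takes the value `1 / λ > 1` exactly once, which
is the equation `λ sinh θ = θ`. The eigenfunction identity is then the addition formula
`sinh (θ (1 - x)) = sinh θ cosh (θ x) - cosh θ sinh (θ x)` with `λ sinh θ = θ` substituted.
-/

lemma strictConvexOn_sinh_Ici : StrictConvexOn ℝ (Ici 0) sinh :=
  StrictMonoOn.strictConvexOn_of_deriv (convex_Ici 0) continuous_sinh.continuousOn <| by
    rw [Real.deriv_sinh, interior_Ici]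
    exact cosh_strictMonoOn.mono Ioi_subset_Ici_self

lemma strictMonoOn_sinh_div_self : StrictMonoOn (fun x ↦ sinh x / x) (Ioi 0) := by
  intro x hx y hy hxy
  simpa using strictConvexOn_sinh_Ici.secant_strict_mono self_mem_Ici (mem_Ici.2 hx.le)
    (mem_Ici.2 hy.le) hx.ne' hy.ne' hxy

lemma tendsto_sinh_div_self_nhdsGT_zero : Tendsto (fun x ↦ sinh x / x) (𝓝[>] 0) (𝓝 1) := by
  have := (hasDerivAt_iff_tendsto_slope.1 (hasDerivAt_sinh 0)).mono_left
    (nhdsGT_le_nhdsNE (0 : ℝ))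
  simpa [slope_fun_def_field] using this

lemma sq_div_four_le_sinh {x : ℝ} (hx : 0 ≤ x) : x ^ 2 / 4 ≤ sinh x := by
  have h_exp := quadratic_le_exp_of_nonneg hx
  have h_exp_neg : exp (-x) ≤ 1 := exp_le_one_iff.2 (neg_nonpos.2 hx)
  rw [sinh_eq]
  nlinarith

lemma tendsto_sinh_div_self_atTop : Tendsto (fun x ↦ sinh x / x) atTop atTop := by
  refine tendsto_atTop_mono' atTop ?_ (tendsto_id.atTop_div_const (by norm_num : (0 : ℝ) < 4))
  filter_upwards [eventually_gt_atTop 0] with x hx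
  rw [id, le_div_iff₀ hx]
  nlinarith [sq_div_four_le_sinh hx.le]

lemma Ioi_one_subset_image_sinh_div_self : Ioi 1 ⊆ (fun x ↦ sinh x / x) '' Ioi 0 :=
  isPreconnected_Ioi.intermediate_value_Ioi (le_principal_iff.2 self_mem_nhdsWithin)
    (le_principal_iff.2 (Ioi_mem_atTop 0)) (by fun_prop (disch := exact fun x hx ↦ ne_of_gt hx))
    tendsto_sinh_div_self_nhdsGT_zero tendsto_sinh_div_self_atTop

lemma mul_sinh_eq_self_iff {lam θ : ℝ} (hlam : 0 < lam) (hθ : 0 < θ) :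
    lam * sinh θ = θ ↔ sinh θ / θ = lam⁻¹ := by
  rw [div_eq_iff hθ.ne', eq_inv_mul_iff_mul_eq₀ hlam.ne']

lemma existsUnique_pos_mul_sinh_eq_self {lam : ℝ} (hlam0 : 0 < lam) (hlam1 : lam < 1) :
    ∃! θ : ℝ, 0 < θ ∧ lam * sinh θ = θ := by
  obtain ⟨θ, hθ, hθ_eq⟩ := Ioi_one_subset_image_sinh_div_self (one_lt_inv₀ hlam0 |>.2 hlam1)
  refine ⟨θ, ⟨hθ, (mul_sinh_eq_self_iff hlam0 hθ).2 hθ_eq⟩, ?_⟩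
  rintro θ' ⟨hθ', hθ'_eq⟩
  exact strictMonoOn_sinh_div_self.injOn hθ' hθ
    (((mul_sinh_eq_self_iff hlam0 hθ').1 hθ'_eq).trans hθ_eq.symm)

lemma hasDerivAt_sinh_mul_div {θ : ℝ} (hθ : θ ≠ 0) (x : ℝ) :
    HasDerivAt (fun y ↦ sinh (θ * y) / θ) (cosh (θ * x)) x := by
  have := ((hasDerivAt_id x).const_mul θ).sinh.div_const θ
  simpa [hθ] using this

lemma sinh_eigenfunction_identity {lam θ : ℝ} (hθ : θ ≠ 0) (hfix : lam * sinh θ = θ) (x : ℝ) :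
    -(deriv (fun y : ℝ ↦ sinh (θ * y) / θ) x) +
        lam * (sinh (θ * (1 - x)) / θ - sinh (θ * x) / θ) =
      -(lam * (1 + cosh θ)) * (sinh (θ * x) / θ) := by
  rw [(hasDerivAt_sinh_mul_div hθ x).deriv, show θ * (1 - x) = θ - θ * x by ring, sinh_sub]
  field_simp
  linear_combination cosh (θ * x) * hfix

/-- for `0 < λ < 1` there is a unique `θ > 0` with `λ sinh θ = θ`; and for this
`θ`, setting `H(x) = sinh(θx)/θ` and `ω = λ(1 + cosh θ)`, one has `ω > 0`, `H > 0` on `(0,1]`,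
and `−H'(x) + λ(H(1−x) − H(x)) = −ω H(x)` on `[0,1]`.  (For `λ = 1` the same identity holds
with `H(x) = x` and `ω = 2`.) -/
theorem pdmp_eigenfunction_identity_of_lt_one
    (lam : ℝ) (hlam0 : 0 < lam) (hlam1 : lam < 1) :
    (∃! θ : ℝ, 0 < θ ∧ lam * Real.sinh θ = θ) ∧
    (∀ θ : ℝ, 0 < θ → lam * Real.sinh θ = θ →
      0 < lam * (1 + Real.cosh θ) ∧
      (∀ x ∈ Set.Ioc (0 : ℝ) 1, 0 < Real.sinh (θ * x) / θ) ∧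
      (∀ x ∈ Set.Icc (0 : ℝ) 1,
        -(deriv (fun y : ℝ => Real.sinh (θ * y) / θ) x) +
          lam * (Real.sinh (θ * (1 - x)) / θ - Real.sinh (θ * x) / θ) =
        -(lam * (1 + Real.cosh θ)) * (Real.sinh (θ * x) / θ))) ∧
    (∀ x ∈ Set.Icc (0 : ℝ) 1,
      -(deriv (fun y : ℝ => y) x) + 1 * ((1 - x) - x) = -(2 : ℝ) * x) := by
  refine ⟨existsUnique_pos_mul_sinh_eq_self hlam0 hlam1, fun θ hθ hfix ↦ ⟨by positivity, ?_, ?_⟩,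
    fun x _ ↦ ?_⟩
  · exact fun x hx ↦ div_pos (sinh_pos_iff.2 (mul_pos hθ hx.1)) hθ
  · exact fun x _ ↦ sinh_eigenfunction_identity hθ.ne' hfix x
  · rw [deriv_id'']
    ring
end

section
/- Let λ > 0, let f₀, f₁ : [0,1] → ℝ be continuous, and for a ∈ ℝ define g₀(x) = ∫₀ˣ [f₀(u) − λ(x−u)(f₀(u) + f₁(u))] du + aλx and g₁(x) = ∫₀ˣ [−f₁(u) − λ(x−u)(f₀(u) + f₁(u))] du + a(λx + 1). Then g₀ and g₁ are C¹ on [0,1], g₀(0) = 0, g₁(0) = a, and for every x ∈ [0,1]: −g₀'(x) + λ(g₁(x) − g₀(x)) = −f₀(x) and g₁'(x) + λ(g₀(x) − g₁(x)) = −f₁(x). Moreover, there exists a unique a ∈ ℝ such that in addition g₁(1) = 0. -/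
/-!
Splitting the kernel, `∫ₐˣ (c u - λ (x - u) S u) du = ∫ₐˣ c - λ (x ∫ₐˣ S - ∫ₐˣ u S u)`, turns each
`gᵢ` into a combination of primitives of continuous functions, so the fundamental theorem of
calculus gives `gᵢ' = cᵢ - λ ∫₀ˣ (f₀ + f₁) + aλ`. The `λ (x - u)` terms cancel in `g₁ - g₀ = a - ∫₀ˣ (f₀ + f₁)`,
which yields both equations. Finally `g₁ a 1` is affine in `a` with slope `λ + 1 > 0`.
-/

open Set intervalIntegral MeasureTheory

section Primitive

variable {c S : ℝ → ℝ} {a b x : ℝ}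

lemma ContinuousOn.intervalIntegrable_of_mem_Icc (hc : ContinuousOn c (Icc a b))
    (hx : x ∈ Icc a b) : IntervalIntegrable c volume a x :=
  (hc.mono (Icc_subset_Icc_right hx.2)).intervalIntegrable_of_Icc hx.1

lemma ContinuousOn.hasDerivWithinAt_primitive (hc : ContinuousOn c (Icc a b))
    (hx : x ∈ Icc a b) : HasDerivWithinAt (fun y => ∫ u in a..y, c u) (c x) (Icc a b) x :=
  haveI : Fact (x ∈ Icc a b) := ⟨hx⟩
  integral_hasDerivWithinAt_right (hc.intervalIntegrable_of_mem_Icc hx)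
    ⟨Icc a b, self_mem_nhdsWithin, hc.aestronglyMeasurable measurableSet_Icc⟩
    (hc.continuousWithinAt hx)

lemma integral_sub_mul_sub_eq (lam : ℝ) (hc : ContinuousOn c (Icc a b))
    (hS : ContinuousOn S (Icc a b)) (hx : x ∈ Icc a b) :
    ∫ u in a..x, (c u - lam * (x - u) * S u)
      = (∫ u in a..x, c u) - lam * (x * (∫ u in a..x, S u) - ∫ u in a..x, u * S u) := by
  have hS' := (hS.intervalIntegrable_of_mem_Icc hx).const_mul (lam * x)
  have hUS : ContinuousOn (fun u => u * S u) (Icc a b) := continuousOn_id.mul hS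
  have huS := (hUS.intervalIntegrable_of_mem_Icc hx).const_mul lam
  have hsplit : ∀ u, c u - lam * (x - u) * S u = c u - ((lam * x) * S u - lam * (u * S u)) :=
    fun u => by ring
  simp only [hsplit]
  rw [integral_sub (hc.intervalIntegrable_of_mem_Icc hx) (hS'.sub huS), integral_sub hS' huS,
    intervalIntegral.integral_const_mul, intervalIntegral.integral_const_mul]
  ring

lemma hasDerivWithinAt_integral_sub_mul_sub (lam : ℝ) (hc : ContinuousOn c (Icc a b))
    (hS : ContinuousOn S (Icc a b)) (hx : x ∈ Icc a b) :
    HasDerivWithinAt (fun y => ∫ u in a..y, (c u - lam * (y - u) * S u))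
      (c x - lam * ∫ u in a..x, S u) (Icc a b) x := by
  have hUS : ContinuousOn (fun u => u * S u) (Icc a b) := continuousOn_id.mul hS
  have hprim : HasDerivWithinAt
      (fun y => (∫ u in a..y, c u) - lam * (y * (∫ u in a..y, S u) - ∫ u in a..y, u * S u))
      (c x - lam * (1 * (∫ u in a..x, S u) + x * S x - x * S x)) (Icc a b) x :=
    (hc.hasDerivWithinAt_primitive hx).sub
      ((((hasDerivWithinAt_id x _).mul (hS.hasDerivWithinAt_primitive hx)).sub
        (hUS.hasDerivWithinAt_primitive hx)).const_mul lam)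
  exact (hprim.congr_of_mem (fun y hy => integral_sub_mul_sub_eq lam hc hS hy) hx).congr_deriv
    (by ring)

end Primitive

lemma existsUnique_add_mul_eq_zero {K : Type*} [Field K] (k : K) {m : K} (hm : m ≠ 0) :
    ∃! a : K, k + a * m = 0 :=
  ⟨-k / m, by field_simp; ring, fun b hb => by field_simp; linear_combination hb⟩

/-- explicit solution of the boundary value problem `L g = −f` for the
piecewise deterministic Markov process generator: the functions
`g₀(x) = ∫₀ˣ [f₀(u) − λ(x−u)(f₀(u)+f₁(u))] du + aλx` and
`g₁(x) = ∫₀ˣ [−f₁(u) − λ(x−u)(f₀(u)+f₁(u))] du + a(λx+1)` are `C¹` on `[0,1]`, satisfy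
`g₀(0) = 0`, `g₁(0) = a`, the equations `−g₀' + λ(g₁ − g₀) = −f₀` and
`g₁' + λ(g₀ − g₁) = −f₁` on `[0,1]`, and there is exactly one `a ∈ ℝ` with `g₁(1) = 0`. -/
theorem pdmp_green_explicit_solution
    (lam : ℝ) (hlam : 0 < lam)
    (f0 f1 : ℝ → ℝ)
    (hf0 : ContinuousOn f0 (Set.Icc 0 1)) (hf1 : ContinuousOn f1 (Set.Icc 0 1))
    (g0 g1 : ℝ → ℝ → ℝ)
    (hg0 : ∀ a x : ℝ, g0 a x =
      (∫ u in (0 : ℝ)..x, (f0 u - lam * (x - u) * (f0 u + f1 u))) + a * lam * x)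
    (hg1 : ∀ a x : ℝ, g1 a x =
      (∫ u in (0 : ℝ)..x, (-f1 u - lam * (x - u) * (f0 u + f1 u))) + a * (lam * x + 1)) :
    (∀ a : ℝ,
      g0 a 0 = 0 ∧ g1 a 0 = a ∧
      ∃ d0 d1 : ℝ → ℝ, ContinuousOn d0 (Set.Icc 0 1) ∧ ContinuousOn d1 (Set.Icc 0 1) ∧
        ∀ x ∈ Set.Icc (0 : ℝ) 1,
          HasDerivWithinAt (g0 a) (d0 x) (Set.Icc 0 1) x ∧
          HasDerivWithinAt (g1 a) (d1 x) (Set.Icc 0 1) x ∧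
          (-(d0 x) + lam * (g1 a x - g0 a x) = -(f0 x)) ∧
          (d1 x + lam * (g0 a x - g1 a x) = -(f1 x))) ∧
    (∃! a : ℝ, g1 a 1 = 0) := by
  have hS : ContinuousOn (fun u => f0 u + f1 u) (Icc 0 1) := hf0.add hf1
  set G : ℝ → ℝ := fun x => ∫ u in (0 : ℝ)..x, (f0 u + f1 u)
  have hG : ContinuousOn G (Icc 0 1) := fun x hx =>
    (hS.hasDerivWithinAt_primitive hx).continuousWithinAt
  have hdiff : ∀ a, ∀ x ∈ Icc (0 : ℝ) 1, g1 a x - g0 a x = a - G x := fun a x hx => by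
    rw [hg0, hg1, integral_sub_mul_sub_eq (c := fun u => -f1 u) lam hf1.neg hS hx,
      integral_sub_mul_sub_eq lam hf0 hS hx, intervalIntegral.integral_neg,
      show G x = _ from integral_add (hf0.intervalIntegrable_of_mem_Icc hx)
        (hf1.intervalIntegrable_of_mem_Icc hx)]
    ring
  refine ⟨fun a => ⟨by simp [hg0], by simp [hg1], fun x => f0 x - lam * G x + a * lam,
    fun x => -f1 x - lam * G x + a * lam, (hf0.sub (continuousOn_const.mul hG)).add continuousOn_const,
    (hf1.neg.sub (continuousOn_const.mul hG)).add continuousOn_const, fun x hx => ⟨?_, ?_, ?_, ?_⟩⟩, ?_⟩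
  · rw [show g0 a = _ from funext (hg0 a)]
    exact ((hasDerivWithinAt_integral_sub_mul_sub lam hf0 hS hx).add
      ((hasDerivWithinAt_id x _).const_mul (a * lam))).congr_deriv (by ring)
  · rw [show g1 a = _ from funext (hg1 a)]
    exact ((hasDerivWithinAt_integral_sub_mul_sub (c := fun u => -f1 u) lam hf1.neg hS hx).add
      ((((hasDerivWithinAt_id x _).const_mul lam).add_const 1).const_mul a)).congr_deriv (by ring)
  · linear_combination lam * hdiff a x hx
  · linear_combination (-lam) * hdiff a x hx
  · have hslope : lam * 1 + 1 ≠ 0 := by positivity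
    simp only [hg1]
    exact existsUnique_add_mul_eq_zero _ hslope
end
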